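/- arXiv:1706.10248 — 7 statements merged into one kernel-verified Lean document; each statement's English description precedes it below -/
import Mathlib

section
/- Let f ∈ L¹([0,∞);ℝ) and define w(t) := ∫₀^{+∞} G(t,s) f(s) ds. Then lim_{t→+∞} w(t)/(1+t) = 0. -/
open MeasureTheory Set Filter Topology

/-- The Green's function part `w(t) = ∫₀^∞ G(t,s) f(s) ds` with `G(t,s) = -min t s`. -/
noncomputable def greenInt (f : ℝ → ℝ) (t : ℝ) : ℝ :=
  ∫ s in Ioi (0:ℝ), (-(min t s)) * f s

/-- For `f ∈ L¹([0,∞))` and `w(t) = ∫₀^∞ G(t,s) f(s) ds`,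
`w(t)/(1+t) → 0` as `t → +∞`. -/
theorem green_integral_weighted_limit
    (f : ℝ → ℝ) (hf : IntegrableOn f (Ioi (0:ℝ))) :
    Tendsto (fun t : ℝ => greenInt f t / (1 + t)) atTop (𝓝 0) := by
  have key : Tendsto (fun t : ℝ => ∫ s in Ioi (0:ℝ), (-(min t s)) * f s / (1 + t))
      atTop (𝓝 (∫ _ in Ioi (0:ℝ), (0:ℝ))) := by
    apply tendsto_integral_filter_of_dominated_convergence (fun s => |f s|)
    · filter_upwards with t
      have h1 : AEStronglyMeasurable (fun s : ℝ => -(min t s) * f s)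
          (volume.restrict (Ioi (0:ℝ))) :=
        (((measurable_const.min measurable_id).neg).aestronglyMeasurable).mul hf.1
      simp only [div_eq_mul_inv]
      exact h1.mul_const _
    · filter_upwards [eventually_ge_atTop (0:ℝ)] with t ht
      filter_upwards [ae_restrict_mem measurableSet_Ioi] with s hs
      have hm0 : 0 ≤ min t s := le_min ht (le_of_lt hs)
      have hm1 : min t s ≤ 1 + t := (min_le_left t s).trans (by linarith)
      have h1t : (0:ℝ) < 1 + t := by linarith
      have : ‖-(min t s) * f s / (1 + t)‖ = min t s * ‖f s‖ / (1 + t) := by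
        rw [norm_div, norm_mul, norm_neg, Real.norm_of_nonneg hm0,
          Real.norm_of_nonneg h1t.le]
      rw [this, Real.norm_eq_abs] at *
      rw [div_le_iff₀ h1t]
      nlinarith [abs_nonneg (f s)]
    · exact hf.abs
    · filter_upwards [ae_restrict_mem measurableSet_Ioi] with s hs
      have hcong : (fun t : ℝ => -(min t s) * f s / (1 + t)) =ᶠ[atTop]
          fun t : ℝ => (-s * f s) / (1 + t) := by
        filter_upwards [eventually_ge_atTop s] with t ht
        rw [min_eq_right ht]
      refine Tendsto.congr' hcong.symm ?_
      exact tendsto_const_nhds.div_atTop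
        (tendsto_atTop_add_const_left _ 1 tendsto_id)
  simpa [greenInt, integral_div] using key
end

section
/- Let (t_k), (a_k), (b_k) be as in the context and let S(t) = Σ_{k : t_k < t} (a_k + b_k(t - t_k)) - t Σ_{k=1}^{∞} b_k. Then lim_{t→+∞} S(t)/(1+t) = 0. -/
open MeasureTheory Set Filter Topology

/-- The impulsive step part
`S(t) = Σ_{k : t_k < t} (a_k + b_k (t - t_k)) - t Σ_k b_k`. -/
noncomputable def impS (tseq a b : ℕ → ℝ) (t : ℝ) : ℝ :=
  (∑' k, if tseq k < t then a k + b k * (t - tseq k) else 0) - t * ∑' k, b k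

/-- The tail `∑_{k ≥ N} |b k|` equals `∑' |b| - ∑_{k < N} |b k|`. -/
lemma impS_tail_eq (b : ℕ → ℝ) (hb : Summable fun k => |b k|) (N : ℕ) :
    (∑' k, if N ≤ k then |b k| else 0) =
      (∑' k, |b k|) - ∑ k ∈ Finset.range N, |b k| := by
  have s1 : Summable fun k => if k < N then |b k| else 0 :=
    Summable.of_norm_bounded hb (fun k => by
      split <;> simp [Real.norm_eq_abs, abs_abs, abs_nonneg])
  have s2 : Summable fun k => if N ≤ k then |b k| else 0 :=
    Summable.of_norm_bounded hb (fun k => by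
      split <;> simp [Real.norm_eq_abs, abs_abs, abs_nonneg])
  have hsplit : (∑' k, |b k|)
      = (∑' k, if k < N then |b k| else 0) + (∑' k, if N ≤ k then |b k| else 0) := by
    rw [← Summable.tsum_add s1 s2]
    refine tsum_congr fun k => ?_
    by_cases h : k < N
    · simp [h, Nat.not_le.mpr h]
    · simp [h, Nat.le_of_not_lt h]
  have hfin : (∑' k, if k < N then |b k| else 0) = ∑ k ∈ Finset.range N, |b k| := by
    rw [tsum_eq_sum (s := Finset.range N)
      (fun k hk => if_neg (by simpa using hk))]
    exact Finset.sum_congr rfl fun k hk => if_pos (Finset.mem_range.1 hk)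
  rw [hsplit, hfin]; ring

lemma impS_key_bound (tseq a b : ℕ → ℝ) (hpos : ∀ k, 0 < tseq k)
    (ha : Summable fun k => |a k|) (hb : Summable fun k => |b k|)
    (N : ℕ) (t : ℝ) (ht1 : 1 ≤ t) (htN : ∀ k < N, tseq k < t) :
    |impS tseq a b t| ≤ (∑' k, |a k|) + (∑ k ∈ Finset.range N, |b k| * tseq k)
      + 2 * (t * ∑' k, if N ≤ k then |b k| else 0) := by
  have ht0 : (0:ℝ) < t := lt_of_lt_of_le one_pos ht1
  have sG : Summable fun k => if N ≤ k then |b k| else 0 :=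
    Summable.of_norm_bounded hb (fun k => by
      split <;> simp [Real.norm_eq_abs, abs_abs, abs_nonneg])
  have sA : Summable fun k => if tseq k < t then a k else 0 :=
    Summable.of_norm_bounded ha (fun k => by
      split <;> simp [Real.norm_eq_abs, abs_nonneg])
  have sBt : Summable fun k => if tseq k < t then b k * t else 0 :=
    Summable.of_norm_bounded (g := fun k => |b k| * t) (hb.mul_right t) (fun k => by
      split
      · simp [Real.norm_eq_abs, abs_mul, abs_of_pos ht0]
      · simp [Real.norm_eq_abs]
        positivity)
  have sTail : Summable fun k => if ¬ tseq k < t then b k * t else 0 :=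
    Summable.of_norm_bounded (g := fun k => |b k| * t) (hb.mul_right t) (fun k => by
      split
      · simp [Real.norm_eq_abs, abs_mul, abs_of_pos ht0]
      · simp [Real.norm_eq_abs]
        positivity)
  have sBtk : Summable fun k => if tseq k < t then b k * tseq k else 0 :=
    Summable.of_norm_bounded (g := fun k => |b k| * t) (hb.mul_right t) (fun k => by
      split
      · next h =>
        rw [Real.norm_eq_abs, abs_mul, abs_of_pos (hpos k)]
        exact mul_le_mul_of_nonneg_left h.le (abs_nonneg _)
      · simp [Real.norm_eq_abs]
        positivity)
  -- decompose S(t)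
  have e1 : (∑' k, if tseq k < t then a k + b k * (t - tseq k) else 0)
      = (∑' k, if tseq k < t then a k else 0) + (∑' k, if tseq k < t then b k * t else 0)
        - (∑' k, if tseq k < t then b k * tseq k else 0) := by
    rw [← Summable.tsum_add sA sBt, ← Summable.tsum_sub (sA.add sBt) sBtk]
    refine tsum_congr fun k => ?_
    by_cases h : tseq k < t <;> simp [h] <;> ring
  have e2 : t * (∑' k, b k)
      = (∑' k, if tseq k < t then b k * t else 0)
        + (∑' k, if ¬ tseq k < t then b k * t else 0) := by
    rw [← Summable.tsum_add sBt sTail]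
    have : (∑' k, ((if tseq k < t then b k * t else 0) + if ¬ tseq k < t then b k * t else 0))
        = ∑' k, b k * t := by
      refine tsum_congr fun k => ?_
      by_cases h : tseq k < t <;> simp [h]
    rw [this, tsum_mul_right, mul_comm]
  have eS : impS tseq a b t
      = (∑' k, if tseq k < t then a k else 0)
        - (∑' k, if tseq k < t then b k * tseq k else 0)
        - (∑' k, if ¬ tseq k < t then b k * t else 0) := by
    unfold impS
    rw [e1, e2]; ring
  -- bounds
  have hA : |∑' k, if tseq k < t then a k else 0| ≤ ∑' k, |a k| := by
    rw [← Real.norm_eq_abs]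
    exact tsum_of_norm_bounded ha.hasSum (fun k => by
      split <;> simp [Real.norm_eq_abs, abs_nonneg])
  have hTail : |∑' k, if ¬ tseq k < t then b k * t else 0|
      ≤ t * ∑' k, if N ≤ k then |b k| else 0 := by
    rw [← Real.norm_eq_abs]
    refine tsum_of_norm_bounded (sG.hasSum.mul_left t) (fun k => ?_)
    by_cases h : tseq k < t
    · simp only [h, not_true_eq_false, if_false, norm_zero, mul_ite, mul_zero]
      split <;> positivity
    · have hk : N ≤ k := by
        by_contra hk
        exact h (htN k (Nat.lt_of_not_le hk))
      simp [h, hk, Real.norm_eq_abs, abs_mul, abs_of_pos ht0, mul_comm]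
  have hfinsum : HasSum (fun k => if k < N then |b k| * tseq k else 0)
      (∑ k ∈ Finset.range N, |b k| * tseq k) := by
    have h := hasSum_sum_of_ne_finset_zero (L := SummationFilter.unconditional ℕ) (s := Finset.range N)
      (f := fun k => if k < N then |b k| * tseq k else 0)
      (fun k hk => if_neg (by simpa using hk))
    rwa [Finset.sum_congr rfl (fun k hk => if_pos (Finset.mem_range.1 hk))] at h
  have hBtk : |∑' k, if tseq k < t then b k * tseq k else 0|
      ≤ (∑ k ∈ Finset.range N, |b k| * tseq k)
        + t * ∑' k, if N ≤ k then |b k| else 0 := by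
    rw [← Real.norm_eq_abs]
    refine tsum_of_norm_bounded (hfinsum.add (sG.hasSum.mul_left t)) (fun k => ?_)
    by_cases hk : k < N
    · rw [Real.norm_eq_abs, if_pos hk, if_neg (Nat.not_le.mpr hk), mul_zero, add_zero]
      split
      · rw [abs_mul, abs_of_pos (hpos k)]
      · simp only [abs_zero]
        exact mul_nonneg (abs_nonneg _) (hpos k).le
    · have hk' : N ≤ k := Nat.le_of_not_lt hk
      rw [Real.norm_eq_abs, if_neg hk, if_pos hk', zero_add]
      split
      · next h =>
        rw [abs_mul, abs_of_pos (hpos k), mul_comm t]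
        exact mul_le_mul_of_nonneg_left h.le (abs_nonneg _)
      · simp only [abs_zero]
        positivity
  have hτ0 : (0:ℝ) ≤ ∑' k, if N ≤ k then |b k| else 0 :=
    tsum_nonneg fun k => by positivity
  rw [eS]
  calc |(∑' k, if tseq k < t then a k else 0)
        - (∑' k, if tseq k < t then b k * tseq k else 0)
        - (∑' k, if ¬ tseq k < t then b k * t else 0)|
      ≤ |(∑' k, if tseq k < t then a k else 0)
        - (∑' k, if tseq k < t then b k * tseq k else 0)|
        + |∑' k, if ¬ tseq k < t then b k * t else 0| := abs_sub _ _
    _ ≤ |∑' k, if tseq k < t then a k else 0|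
        + |∑' k, if tseq k < t then b k * tseq k else 0|
        + |∑' k, if ¬ tseq k < t then b k * t else 0| := by
        have := abs_sub (∑' k, if tseq k < t then a k else 0)
          (∑' k, if tseq k < t then b k * tseq k else 0)
        linarith
    _ ≤ _ := by linarith

/-- For a strictly increasing sequence `(t_k)` of positive reals tending
to `+∞` and absolutely summable sequences `(a_k)`, `(b_k)`, the impulsive step part
satisfies `S(t)/(1+t) → 0` as `t → +∞`. -/
theorem impulsive_part_weighted_limit
    (tseq a b : ℕ → ℝ)
    (hmono : StrictMono tseq) (hpos : ∀ k, 0 < tseq k)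
    (htop : Tendsto tseq atTop atTop)
    (ha : Summable fun k => |a k|) (hb : Summable fun k => |b k|) :
    Tendsto (fun t : ℝ => impS tseq a b t / (1 + t)) atTop (𝓝 0) := by
  rw [Metric.tendsto_nhds]
  intro ε hε
  have hε' : (0:ℝ) < ε / 3 := by linarith
  obtain ⟨N, hN⟩ : ∃ N, (∑' k, |b k|) - ∑ k ∈ Finset.range N, |b k| < ε / 3 := by
    obtain ⟨N, hN⟩ := (Metric.tendsto_atTop.mp hb.hasSum.tendsto_sum_nat) (ε / 3) hε'
    refine ⟨N, ?_⟩
    have := hN N le_rfl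
    rw [Real.dist_eq, abs_sub_lt_iff] at this
    linarith [this.2]
  have hτ : (∑' k, if N ≤ k then |b k| else 0) < ε / 3 := by
    rw [impS_tail_eq b hb N]; exact hN
  have hτ0 : (0:ℝ) ≤ ∑' k, if N ≤ k then |b k| else 0 :=
    tsum_nonneg fun k => by positivity
  set K : ℝ := (∑' k, |a k|) + ∑ k ∈ Finset.range N, |b k| * tseq k with hK
  have hev1 : ∀ᶠ t : ℝ in atTop, K / (1 + t) < ε / 3 := by
    have hT : Tendsto (fun t : ℝ => K / (1 + t)) atTop (𝓝 0) :=
      Tendsto.div_atTop tendsto_const_nhds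
        (tendsto_atTop_add_const_left _ 1 tendsto_id)
    exact hT.eventually_lt_const hε'
  have hev2 : ∀ᶠ t : ℝ in atTop, ∀ k < N, tseq k < t := by
    have h := (Filter.eventually_all_finset (Finset.range N)
      (p := fun k (t : ℝ) => tseq k < t)).2
      (fun k _ => eventually_gt_atTop (tseq k))
    filter_upwards [h] with t ht k hk using ht k (Finset.mem_range.2 hk)
  filter_upwards [hev1, hev2, eventually_ge_atTop (1:ℝ)] with t h1 h2 h3
  have key := impS_key_bound tseq a b hpos ha hb N t h3 h2
  have h1t : (0:ℝ) < 1 + t := by linarith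
  rw [Real.dist_eq, sub_zero, abs_div, abs_of_pos h1t, div_lt_iff₀ h1t]
  have hKlt : K < ε / 3 * (1 + t) := by
    rw [div_lt_iff₀ h1t] at h1
    exact h1
  have h2t : 2 * (t * ∑' k, if N ≤ k then |b k| else 0) ≤ 2 * (t * (ε / 3)) := by
    have := mul_le_mul_of_nonneg_left (le_of_lt hτ) (by linarith : (0:ℝ) ≤ t)
    linarith
  have : |impS tseq a b t| ≤ K + 2 * (t * (ε / 3)) := by
    rw [hK]; linarith
  nlinarith [this, hKlt, h1t, hε'.le, h3]
end

section
/- Let A, B ∈ ℝ, let (t_k), (a_k), (b_k) be as in the context, let f ∈ L¹([0,∞);ℝ), and define u(t) = A + B t + Σ_{k : t_k < t} (a_k + b_k(t - t_k)) - t Σ_{k=1}^{∞} b_k + ∫₀^{+∞} G(t,s) f(s) ds. Then u(0) = A; u is differentiable at every t ∉ {t_k : k ∈ ℕ} with u'(t) = B + Σ_{k : t_k < t} b_k - Σ_{k=1}^{∞} b_k - ∫_{t}^{+∞} f(s) ds; and lim_{t→+∞} u(t)/(1+t) = B and lim_{t→+∞} u'(t) = B (the latter limit taken along t ∉ {t_k}).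 -/
open MeasureTheory Set Filter Topology

/-- Its derivative off the impulse points, `S'(t) = Σ_{k : t_k < t} b_k - Σ_k b_k`. -/
noncomputable def impS' (tseq b : ℕ → ℝ) (t : ℝ) : ℝ :=
  (∑' k, if tseq k < t then b k else 0) - ∑' k, b k

private lemma aux_inv_tendsto : Tendsto (fun t : ℝ => (1 + t)⁻¹) atTop (𝓝 0) :=
  tendsto_inv_atTop_zero.comp (tendsto_atTop_add_const_left _ 1 tendsto_id)

private lemma impS_hasDerivAt (tseq a b : ℕ → ℝ)
    (htop : Tendsto tseq atTop atTop)
    {t : ℝ} (htn : t ∉ range tseq) :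
    HasDerivAt (impS tseq a b) (impS' tseq b t) t := by
  obtain ⟨N, hN⟩ := eventually_atTop.mp (htop.eventually_ge_atTop (t + 1))
  have hNt : ∀ k, N ≤ k → ¬ tseq k < t := fun k hk =>
    not_lt.2 (le_trans (by linarith) (hN k hk))
  have hNt' : ∀ k, k ∉ Finset.range N → ¬ tseq k < t := fun k hk =>
    hNt k (le_of_not_gt fun h => hk (Finset.mem_range.2 h))
  have hev : ∀ᶠ s in 𝓝 t,
      (∀ k ∈ Finset.range N, (tseq k < s ↔ tseq k < t)) ∧ s < t + 1 := by
    refine Filter.Eventually.and ?_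
      (eventually_of_mem (Iio_mem_nhds (by linarith)) fun s hs => hs)
    refine (eventually_all_finset _).mpr fun k _ => ?_
    rcases lt_or_gt_of_ne (fun h : tseq k = t => htn ⟨k, h⟩) with h | h
    · exact eventually_of_mem (Ioi_mem_nhds h) fun s hs => iff_of_true hs h
    · exact eventually_of_mem (Iio_mem_nhds h) fun s hs =>
        iff_of_false (not_lt.2 (le_of_lt hs)) (not_lt.2 h.le)
  have hkey : ∀ s : ℝ, ((∀ k ∈ Finset.range N, (tseq k < s ↔ tseq k < t)) ∧ s < t + 1) →
      ∀ k, (tseq k < s ↔ tseq k < t) := by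
    intro s hs k
    by_cases hk : k ∈ Finset.range N
    · exact hs.1 k hk
    · have hk' : N ≤ k := le_of_not_gt fun h => hk (Finset.mem_range.2 h)
      exact iff_of_false (not_lt.2 (lt_of_lt_of_le hs.2 (hN k hk')).le) (hNt k hk')
  have hL : HasDerivAt
      (fun s => (∑ k ∈ Finset.range N, if tseq k < t then a k + b k * (s - tseq k) else 0)
        - s * ∑' k, b k)
      ((∑ k ∈ Finset.range N, if tseq k < t then b k else 0) - ∑' k, b k) t := by
    refine HasDerivAt.sub ?_ (by simpa using (hasDerivAt_id t).mul_const (∑' k, b k))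
    refine HasDerivAt.fun_sum fun k _ => ?_
    by_cases h : tseq k < t
    · simp only [if_pos h]
      simpa using (((hasDerivAt_id t).sub_const (tseq k)).const_mul (b k)).const_add (a k)
    · simp only [if_neg h]; exact hasDerivAt_const t 0
  have hsum_b : (∑' k, if tseq k < t then b k else 0)
      = ∑ k ∈ Finset.range N, if tseq k < t then b k else 0 :=
    tsum_eq_sum fun k hk => if_neg (hNt' k hk)
  have heq : impS tseq a b =ᶠ[𝓝 t]
      (fun s => (∑ k ∈ Finset.range N, if tseq k < t then a k + b k * (s - tseq k) else 0)
        - s * ∑' k, b k) := by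
    refine hev.mono fun s hs => ?_
    have hiff := hkey s hs
    rw [impS]
    congr 1
    rw [tsum_eq_sum (s := Finset.range N)
      (fun k hk => if_neg fun h => hNt' k hk ((hiff k).1 h))]
    exact Finset.sum_congr rfl fun k _ => if_congr (hiff k) rfl rfl
  have hfinal := hL.congr_of_eventuallyEq heq
  rw [impS', hsum_b]
  exact hfinal

private lemma greenInt_hasDerivAt (f : ℝ → ℝ) (hf : IntegrableOn f (Ioi (0:ℝ)))
    {t : ℝ} (ht : 0 ≤ t) :
    HasDerivAt (greenInt f) (-(∫ s in Ioi t, f s)) t := by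
  set g : ℝ → ℝ := (Ioi (0:ℝ)).indicator f with hg_def
  have hg : Integrable g := (integrable_indicator_iff measurableSet_Ioi).2 hf
  have hgw : ∀ t' : ℝ, greenInt f t' = -∫ s, min t' s * g s := by
    intro t'
    rw [greenInt, ← integral_indicator measurableSet_Ioi, ← integral_neg]
    congr 1
    funext s
    by_cases hs : s ∈ Ioi (0:ℝ)
    · simp [hg_def, indicator_of_mem hs]
    · simp [hg_def, indicator_of_notMem hs]
  have hmin : ∀ t' : ℝ, Integrable (fun s => min t' s * g s) := by
    intro t'
    refine Integrable.mono' (hg.norm.const_mul |t'|) ?_ ?_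
    · exact ((continuous_const.min continuous_id).aestronglyMeasurable).mul hg.aestronglyMeasurable
    · filter_upwards with s
      rw [norm_mul]
      by_cases hs : s ∈ Ioi (0:ℝ)
      · have h1 : min t' s ≤ |t'| := le_trans (min_le_left _ _) (le_abs_self _)
        have h2 : -|t'| ≤ min t' s :=
          le_min (neg_abs_le t') (le_trans (neg_nonpos.2 (abs_nonneg t')) (le_of_lt hs))
        rw [Real.norm_eq_abs]
        exact mul_le_mul_of_nonneg_right (abs_le.2 ⟨h2, h1⟩) (norm_nonneg _)
      · simp [hg_def, indicator_of_notMem hs]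
  have hind : Integrable ((Ioi t).indicator g) := hg.indicator measurableSet_Ioi
  have heqi : (fun s => (Ioi t).indicator (fun _ => (1:ℝ)) s * g s) = (Ioi t).indicator g := by
    funext s
    by_cases hs : s ∈ Ioi t <;> simp [hs]
  have hind1 : Integrable (fun s => (Ioi t).indicator (fun _ => (1:ℝ)) s * g s) := by
    rw [heqi]; exact hind
  have hI : (∫ s in Ioi t, f s) = ∫ s, (Ioi t).indicator g s := by
    rw [integral_indicator measurableSet_Ioi]
    exact setIntegral_congr_fun measurableSet_Ioi fun s hs =>
      (indicator_of_mem (show s ∈ Ioi (0:ℝ) from lt_of_le_of_lt ht hs) f).symm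
  rw [hasDerivAt_iff_isLittleO, Asymptotics.isLittleO_iff]
  intro c hc
  have hcont : Continuous fun x => ∫ u in t..x, |g u| := hg.abs.continuous_primitive t
  have h0 : Tendsto (fun x => ∫ u in t..x, |g u|) (𝓝 t) (𝓝 0) := by
    have := hcont.tendsto t
    rwa [intervalIntegral.integral_same] at this
  have hev : ∀ᶠ t' in 𝓝 t, abs (∫ u in t..t', |g u|) < c / 2 := by
    have h1 := h0.abs
    rw [abs_zero] at h1
    exact h1.eventually_lt_const (by linarith)
  filter_upwards [hev] with t' ht'
  have hrepr : greenInt f t' - greenInt f t - (t' - t) • (-(∫ s in Ioi t, f s))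
      = ∫ s, ((min t s - min t' s) + (t' - t) * (Ioi t).indicator (fun _ => (1:ℝ)) s) * g s := by
    have e1 : ∀ s : ℝ, ((min t s - min t' s) + (t' - t) * (Ioi t).indicator (fun _ => (1:ℝ)) s) * g s
        = (min t s * g s - min t' s * g s)
          + (t' - t) * ((Ioi t).indicator (fun _ => (1:ℝ)) s * g s) := fun s => by ring
    rw [hgw t', hgw t, hI]
    simp_rw [e1]
    have i1 : Integrable (fun s => min t s * g s - min t' s * g s) := (hmin t).sub (hmin t')
    have i2 : Integrable
        (fun s => (t' - t) * ((Ioi t).indicator (fun _ => (1:ℝ)) s * g s)) :=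
      hind1.const_mul _
    rw [integral_add i1 i2, integral_sub (hmin t) (hmin t'), integral_const_mul, heqi]
    simp only [smul_eq_mul]
    ring
  rw [hrepr]
  have hkey : ∀ s : ℝ,
      ‖((min t s - min t' s) + (t' - t) * (Ioi t).indicator (fun _ => (1:ℝ)) s) * g s‖
      ≤ (2 * |t' - t|) * ((uIcc t t').indicator (fun _ => (1:ℝ)) s * |g s|) := by
    intro s
    rw [norm_mul, Real.norm_eq_abs, Real.norm_eq_abs]
    by_cases hs : s ∈ uIcc t t'
    · rw [indicator_of_mem hs]
      have hminb : |min t s - min t' s| ≤ |t' - t| := by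
        rcases le_total t s with h1 | h1 <;> rcases le_total t' s with h2 | h2
        · rw [min_eq_left h1, min_eq_left h2]
          rw [abs_le]
          constructor <;> linarith [le_abs_self (t' - t), neg_abs_le (t' - t)]
        · rw [min_eq_left h1, min_eq_right h2]
          rw [abs_le]
          constructor <;> linarith [le_abs_self (t' - t), neg_abs_le (t' - t)]
        · rw [min_eq_right h1, min_eq_left h2]
          rw [abs_le]
          constructor <;> linarith [le_abs_self (t' - t), neg_abs_le (t' - t)]
        · rw [min_eq_right h1, min_eq_right h2]
          rw [abs_le]
          constructor <;> linarith [le_abs_self (t' - t), neg_abs_le (t' - t)]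
      have hindb : |(t' - t) * (Ioi t).indicator (fun _ => (1:ℝ)) s| ≤ |t' - t| := by
        rw [abs_mul]
        by_cases h : s ∈ Ioi t <;> simp [h, abs_nonneg]
      calc |min t s - min t' s + (t' - t) * (Ioi t).indicator (fun _ => (1:ℝ)) s| * |g s|
          ≤ (|t' - t| + |t' - t|) * |g s| :=
            mul_le_mul_of_nonneg_right ((abs_add_le _ _).trans (add_le_add hminb hindb))
              (abs_nonneg _)
        _ = 2 * |t' - t| * (1 * |g s|) := by ring
    · rw [indicator_of_notMem hs]
      have hz : (min t s - min t' s) + (t' - t) * (Ioi t).indicator (fun _ => (1:ℝ)) s = 0 := by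
        rcases le_total t s with h1 | h1 <;> rcases le_total t' s with h2 | h2
        · have hts : t < s := by
            rcases lt_or_eq_of_le h1 with h | h
            · exact h
            · exact absurd (h ▸ left_mem_uIcc) hs
          rw [min_eq_left h1, min_eq_left h2, indicator_of_mem (mem_Ioi.mpr hts)]
          ring
        · exact absurd (mem_uIcc.2 (Or.inl ⟨h1, h2⟩)) hs
        · exact absurd (mem_uIcc.2 (Or.inr ⟨h2, h1⟩)) hs
        · have hts : s ∉ Ioi t := by simp only [mem_Ioi, not_lt]; exact h1
          rw [min_eq_right h1, min_eq_right h2, indicator_of_notMem hts]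
          ring
      rw [hz]
      simp
  have hbi : Integrable (fun s => (2 * |t' - t|) *
      ((uIcc t t').indicator (fun _ => (1:ℝ)) s * |g s|)) := by
    have heqf : (fun s => (2 * |t' - t|) * ((uIcc t t').indicator (fun _ => (1:ℝ)) s * |g s|))
        = fun s => (2 * |t' - t|) * (uIcc t t').indicator (fun s => |g s|) s := by
      funext s
      by_cases hs : s ∈ uIcc t t' <;> simp [hs]
    rw [heqf]
    exact (hg.abs.indicator measurableSet_uIcc).const_mul _
  calc ‖∫ s, ((min t s - min t' s) + (t' - t) * (Ioi t).indicator (fun _ => (1:ℝ)) s) * g s‖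
      ≤ ∫ s, (2 * |t' - t|) * ((uIcc t t').indicator (fun _ => (1:ℝ)) s * |g s|) :=
        norm_integral_le_of_norm_le hbi (Filter.Eventually.of_forall hkey)
    _ = (2 * |t' - t|) * ∫ s in uIcc t t', |g s| := by
        rw [integral_const_mul]
        congr 1
        rw [← integral_indicator measurableSet_uIcc]
        congr 1
        funext s
        by_cases hs : s ∈ uIcc t t' <;> simp [hs]
    _ ≤ (2 * |t' - t|) * (c / 2) := by
        refine mul_le_mul_of_nonneg_left ?_ (by positivity)
        rcases le_total t t' with h | h
        · rw [uIcc_of_le h, integral_Icc_eq_integral_Ioc, ← intervalIntegral.integral_of_le h]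
          exact (le_abs_self _).trans ht'.le
        · rw [uIcc_of_ge h, integral_Icc_eq_integral_Ioc, ← intervalIntegral.integral_of_le h,
            intervalIntegral.integral_symm]
          exact (neg_le_abs _).trans ht'.le
    _ = c * ‖t' - t‖ := by rw [Real.norm_eq_abs]; ring

/-- Let
`u(t) = A + B t + Σ_{k : t_k < t}(a_k + b_k (t - t_k)) - t Σ_k b_k + ∫₀^∞ G(t,s) f(s) ds`.
Then `u(0) = A`; `u` is differentiable at every `t ∉ {t_k}` with
`u'(t) = B + Σ_{k : t_k < t} b_k - Σ_k b_k - ∫_t^∞ f(s) ds`; `u(t)/(1+t) → B` and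
`u'(t) → B` as `t → +∞` (the latter along `t ∉ {t_k}`). -/
theorem solution_representation_properties
    (A B : ℝ) (tseq a b : ℕ → ℝ)
    (hmono : StrictMono tseq) (hpos : ∀ k, 0 < tseq k)
    (htop : Tendsto tseq atTop atTop)
    (ha : Summable fun k => |a k|) (hb : Summable fun k => |b k|)
    (f : ℝ → ℝ) (hf : IntegrableOn f (Ioi (0:ℝ))) :
    (A + B * 0 + impS tseq a b 0 + greenInt f 0 = A) ∧
    (∀ t ∈ Ici (0:ℝ), t ∉ range tseq →
      HasDerivAt (fun t : ℝ => A + B * t + impS tseq a b t + greenInt f t)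
        (B + impS' tseq b t - ∫ s in Ioi t, f s) t) ∧
    Tendsto (fun t : ℝ => (A + B * t + impS tseq a b t + greenInt f t) / (1 + t))
      atTop (𝓝 B) ∧
    Tendsto (fun t : ℝ => B + impS' tseq b t - ∫ s in Ioi t, f s)
      (atTop ⊓ 𝓟 {t : ℝ | t ∉ range tseq}) (𝓝 B) := by
  have hSb : Summable b := Summable.of_abs hb
  have hsupp : ∀ t : ℝ, ∃ N : ℕ, ∀ k, N ≤ k → ¬ tseq k < t := by
    intro t
    obtain ⟨N, hN⟩ := eventually_atTop.mp (htop.eventually_ge_atTop t)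
    exact ⟨N, fun k hk => not_lt.2 (hN k hk)⟩
  have hsumc : ∀ t : ℝ, Summable fun k => if tseq k < t then a k + b k * (t - tseq k) else 0 := by
    intro t
    obtain ⟨N, hN⟩ := hsupp t
    exact summable_of_ne_finset_zero (s := Finset.range N)
      fun k hk => if_neg (hN k (le_of_not_gt fun h => hk (Finset.mem_range.2 h)))
  -- tail integral tends to zero
  have h5 : Tendsto (fun t : ℝ => ∫ s in Ioi t, f s) atTop (𝓝 0) := by
    have h1 := intervalIntegral_tendsto_integral_Ioi 0 hf tendsto_id
    have h2 : Tendsto (fun t : ℝ => (∫ s in Ioi (0:ℝ), f s) - ∫ s in (0:ℝ)..t, f s)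
        atTop (𝓝 ((∫ s in Ioi (0:ℝ), f s) - ∫ s in Ioi (0:ℝ), f s)) :=
      tendsto_const_nhds.sub h1
    rw [sub_self] at h2
    refine Tendsto.congr' ?_ h2
    filter_upwards [eventually_ge_atTop (0:ℝ)] with t ht
    rw [intervalIntegral.integral_of_le ht]
    have hsplit : ∫ s in Ioi (0:ℝ), f s = (∫ s in Ioc 0 t, f s) + ∫ s in Ioi t, f s := by
      rw [← setIntegral_union (Ioc_disjoint_Ioi le_rfl) measurableSet_Ioi
        (hf.mono_set Ioc_subset_Ioi_self) (hf.mono_set (Ioi_subset_Ioi ht)),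
        Ioc_union_Ioi_eq_Ioi ht]
    rw [hsplit]
    ring
  -- impS' tends to zero
  have h6 : Tendsto (fun t : ℝ => impS' tseq b t) atTop (𝓝 0) := by
    have hdct := tendsto_tsum_of_dominated_convergence (𝓕 := atTop)
      (f := fun (t : ℝ) k => if tseq k < t then b k else 0) (g := b)
      (bound := fun k => |b k|) hb
      (fun k => by
        refine Tendsto.congr' ?_ tendsto_const_nhds
        filter_upwards [eventually_gt_atTop (tseq k)] with t htk
        exact (if_pos htk).symm)
      (Filter.Eventually.of_forall fun t k => by
        by_cases h : tseq k < t <;> simp [h])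
    have h7 : Tendsto (fun t : ℝ => (∑' k, if tseq k < t then b k else 0) - ∑' k, b k)
        atTop (𝓝 ((∑' k, b k) - ∑' k, b k)) := hdct.sub_const _
    rw [sub_self] at h7
    exact h7
  -- impS / (1+t) tends to zero
  have h3 : Tendsto (fun t : ℝ => impS tseq a b t / (1 + t)) atTop (𝓝 0) := by
    have hdct := tendsto_tsum_of_dominated_convergence (𝓕 := atTop)
      (f := fun (t : ℝ) k =>
        ((if tseq k < t then a k + b k * (t - tseq k) else 0) - t * b k) / (1 + t))
      (g := fun _ => (0:ℝ)) (bound := fun k => |a k| + |b k|) (ha.add hb)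
      (fun k => by
        have hh : Tendsto (fun t : ℝ => (a k - b k * tseq k) * (1 + t)⁻¹) atTop
            (𝓝 ((a k - b k * tseq k) * 0)) := aux_inv_tendsto.const_mul _
        rw [mul_zero] at hh
        refine Tendsto.congr' ?_ hh
        filter_upwards [eventually_gt_atTop (tseq k)] with t htk
        rw [if_pos htk]
        rw [div_eq_mul_inv]
        congr 1
        ring)
      (by
        filter_upwards [eventually_ge_atTop (0:ℝ)] with t ht k
        rw [Real.norm_eq_abs, abs_div, abs_of_nonneg (by linarith : (0:ℝ) ≤ 1 + t),
          div_le_iff₀ (by linarith : (0:ℝ) < 1 + t)]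
        by_cases hk : tseq k < t
        · rw [if_pos hk]
          have he : a k + b k * (t - tseq k) - t * b k = a k - b k * tseq k := by ring
          rw [he]
          have h1 : |a k - b k * tseq k| ≤ |a k| + |b k| * tseq k := by
            calc |a k - b k * tseq k| ≤ |a k| + |b k * tseq k| := abs_sub _ _
              _ = |a k| + |b k| * tseq k := by
                  rw [abs_mul, abs_of_nonneg (hpos k).le]
          nlinarith [abs_nonneg (a k), abs_nonneg (b k), (hpos k).le]
        · rw [if_neg hk, zero_sub, abs_neg, abs_mul, abs_of_nonneg ht]
          nlinarith [abs_nonneg (a k), abs_nonneg (b k)])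
    have heq : ∀ᶠ t : ℝ in atTop, impS tseq a b t / (1 + t)
        = ∑' k, ((if tseq k < t then a k + b k * (t - tseq k) else 0) - t * b k) / (1 + t) := by
      filter_upwards [] with t
      rw [impS]
      rw [show t * (∑' k, b k) = ∑' k, t * b k from (tsum_mul_left).symm,
        ← Summable.tsum_sub (hsumc t) (hSb.mul_left t), tsum_div_const]
    refine Tendsto.congr' (heq.mono fun t h => h.symm) ?_
    simpa using hdct
  -- greenInt / (1+t) tends to zero
  have h4 : Tendsto (fun t : ℝ => greenInt f t / (1 + t)) atTop (𝓝 0) := by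
    have heq : ∀ t : ℝ, greenInt f t / (1 + t)
        = ∫ s in Ioi (0:ℝ), (-(min t s) / (1 + t)) * f s := by
      intro t
      rw [greenInt, ← integral_div]
      congr 1
      funext s
      ring
    have hdct := tendsto_integral_filter_of_dominated_convergence
      (μ := volume.restrict (Ioi (0:ℝ))) (l := atTop)
      (F := fun (t : ℝ) s => (-(min t s) / (1 + t)) * f s) (f := fun _ => (0:ℝ))
      (bound := fun s => |f s|)
      (Filter.Eventually.of_forall fun t =>
        (((continuous_const.min continuous_id).neg.div_const _).aestronglyMeasurable).mul
          hf.aestronglyMeasurable)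
      (by
        filter_upwards [eventually_ge_atTop (0:ℝ)] with t ht
        rw [ae_restrict_iff' measurableSet_Ioi]
        refine Filter.Eventually.of_forall fun s hs => ?_
        rw [norm_mul, Real.norm_eq_abs, Real.norm_eq_abs, abs_div, abs_neg]
        have h1 : |min t s| ≤ 1 + t := by
          rw [abs_of_nonneg (le_min ht (le_of_lt hs))]
          have := min_le_left t s
          linarith
        have h2 : |min t s| / |1 + t| ≤ 1 := by
          rw [abs_of_nonneg (by linarith : (0:ℝ) ≤ 1 + t)]
          rw [div_le_one (by linarith : (0:ℝ) < 1 + t)]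
          exact h1
        exact mul_le_of_le_one_left (abs_nonneg _) h2)
      hf.norm
      (by
        rw [ae_restrict_iff' measurableSet_Ioi]
        refine Filter.Eventually.of_forall fun s hs => ?_
        have hh : Tendsto (fun t : ℝ => (-s * f s) * (1 + t)⁻¹) atTop
            (𝓝 ((-s * f s) * 0)) := aux_inv_tendsto.const_mul _
        rw [mul_zero] at hh
        refine Tendsto.congr' ?_ hh
        filter_upwards [eventually_ge_atTop s] with t htl
        rw [min_eq_right htl, div_eq_mul_inv]
        ring)
    refine Tendsto.congr (fun t => (heq t).symm) ?_
    simpa using hdct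
  refine ⟨?_, ?_, ?_, ?_⟩
  · -- u(0) = A
    have h1 : impS tseq a b 0 = 0 := by
      rw [impS]
      have hz : ∀ k, (if tseq k < (0:ℝ) then a k + b k * (0 - tseq k) else 0) = 0 :=
        fun k => if_neg (not_lt.2 (hpos k).le)
      rw [tsum_congr hz, tsum_zero, zero_mul, sub_zero]
    have h2 : greenInt f 0 = 0 := by
      rw [greenInt]
      rw [setIntegral_congr_fun measurableSet_Ioi (g := fun _ => (0:ℝ))
        (fun s hs => by rw [min_eq_left (le_of_lt hs)]; ring)]
      exact integral_zero _ _
    rw [h1, h2]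
    ring
  · intro t ht htn
    have hgd := greenInt_hasDerivAt f hf ht
    have hsd := impS_hasDerivAt tseq a b htop htn
    have hlin : HasDerivAt (fun t : ℝ => A + B * t) B t := by
      simpa using ((hasDerivAt_id t).const_mul B).const_add A
    have hall := (hlin.add hsd).add hgd
    rw [sub_eq_add_neg]
    exact hall
  · -- u(t)/(1+t) → B
    have hq : ∀ t : ℝ, (A + B * t + impS tseq a b t + greenInt f t) / (1 + t)
        = A * (1 + t)⁻¹ + B * (t / (1 + t)) + impS tseq a b t / (1 + t)
          + greenInt f t / (1 + t) := by
      intro t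
      simp only [add_div, div_eq_mul_inv]
      ring
    have l1 : Tendsto (fun t : ℝ => A * (1 + t)⁻¹) atTop (𝓝 0) := by
      simpa using aux_inv_tendsto.const_mul A
    have l2 : Tendsto (fun t : ℝ => B * (t / (1 + t))) atTop (𝓝 B) := by
      have hfrac : Tendsto (fun t : ℝ => t / (1 + t)) atTop (𝓝 1) := by
        have h := (tendsto_const_nhds (x := (1:ℝ)) (f := atTop)).sub aux_inv_tendsto
        rw [sub_zero] at h
        refine Tendsto.congr' ?_ h
        filter_upwards [eventually_gt_atTop (0:ℝ)] with t htp
        have h1t : (1:ℝ) + t ≠ 0 := by linarith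
        field_simp
        ring
      simpa using hfrac.const_mul B
    have hcomb := ((l1.add l2).add h3).add h4
    refine Tendsto.congr (fun t => (hq t).symm) ?_
    simpa using hcomb
  · -- u'(t) → B
    have hcomb := ((tendsto_const_nhds (x := B) (f := atTop)).add h6).sub h5
    have : Tendsto (fun t : ℝ => B + impS' tseq b t - ∫ s in Ioi t, f s) atTop (𝓝 B) := by
      simpa using hcomb
    exact this.mono_left inf_le_left
end

section
/- Let A, B ∈ ℝ, let (t_k) be a strictly increasing sequence of positive reals with t_k → +∞ (and set t_0 = 0), let (φ_k), (ψ_k) be nonnegative real sequences with Σφ_k < ∞ and Σψ_k < ∞, and let Φ ∈ L¹([0,∞)) be nonnegative. For real sequences (a_k), (b_k) with |a_k| ≤ φ_k, |b_k| ≤ ψ_k and measurable f with |f| ≤ Φ a.e., define u[a,b,f](t) = A + B t + Σ_{k : t_k < t} (a_k + b_k(t - t_k)) - t Σ_{k=1}^{∞} b_k + ∫₀^{+∞} G(t,s) f(s) ds. Then the family of weighted functions t ↦ u[a,b,f](t)/(1+t) and the family of derivatives t ↦ u[a,b,f]'(t) are equicontinuous on each interval (t_i, t_{i+1}], i.e.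 for every i ≥ 0 and every ε > 0 there exists δ > 0 such that for all admissible data (a_k), (b_k), f and all ι₁, ι₂ ∈ (t_i, t_{i+1}] with |ι₁ - ι₂| < δ, one has |u[a,b,f](ι₁)/(1+ι₁) - u[a,b,f](ι₂)/(1+ι₂)| < ε and |u[a,b,f]'(ι₁) - u[a,b,f]'(ι₂)| < ε. -/
open MeasureTheory Set Filter Topology

/-- The extended sequence of impulse points, with `t_0 = 0` prepended:
`tExt tseq 0 = 0` and `tExt tseq (i+1) = tseq i`. -/
def tExt (tseq : ℕ → ℝ) : ℕ → ℝ
  | 0 => 0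
  | n + 1 => tseq n

set_option maxHeartbeats 1000000 in
/-- The family of weighted functions `t ↦ u[a,b,f](t)/(1+t)` and of
derivatives `t ↦ u[a,b,f]'(t)`, over all admissible data `(a_k)`, `(b_k)`, `f` with
`|a_k| ≤ φ_k`, `|b_k| ≤ ψ_k`, `|f| ≤ Φ` a.e., is equicontinuous on each interval
`(t_i, t_{i+1}]` (with `t_0 = 0`). -/
theorem equicontinuity_on_intervals
    (A B : ℝ) (tseq φ ψ : ℕ → ℝ)
    (hmono : StrictMono tseq) (hpos : ∀ k, 0 < tseq k)
    (htop : Tendsto tseq atTop atTop)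
    (hφ0 : ∀ k, 0 ≤ φ k) (hψ0 : ∀ k, 0 ≤ ψ k)
    (hφs : Summable φ) (hψs : Summable ψ)
    (Φ : ℝ → ℝ) (hΦ0 : ∀ s, 0 ≤ Φ s) (hΦi : IntegrableOn Φ (Ioi (0:ℝ))) :
    ∀ i : ℕ, ∀ ε > (0:ℝ), ∃ δ > (0:ℝ), ∀ a b : ℕ → ℝ, ∀ f : ℝ → ℝ,
      (∀ k, |a k| ≤ φ k) → (∀ k, |b k| ≤ ψ k) → Measurable f →
      (∀ᵐ s ∂(volume.restrict (Ioi (0:ℝ))), |f s| ≤ Φ s) →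
      ∀ ι₁ ∈ Ioc (tExt tseq i) (tExt tseq (i+1)),
      ∀ ι₂ ∈ Ioc (tExt tseq i) (tExt tseq (i+1)),
        |ι₁ - ι₂| < δ →
        |(A + B * ι₁ + impS tseq a b ι₁ + greenInt f ι₁) / (1 + ι₁)
          - (A + B * ι₂ + impS tseq a b ι₂ + greenInt f ι₂) / (1 + ι₂)| < ε ∧
        |(B + impS' tseq b ι₁ - ∫ s in Ioi ι₁, f s)
          - (B + impS' tseq b ι₂ - ∫ s in Ioi ι₂, f s)| < ε := by
  intro i ε hε
  set T := tseq i with hTdef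
  have hT0 : 0 < T := hpos i
  have hIoc : ∀ t ∈ Ioc (tExt tseq i) (tExt tseq (i+1)), 0 < t ∧ t ≤ T := by
    intro t ht
    have h0 : (0:ℝ) ≤ tExt tseq i := by
      cases i with
      | zero => simp [tExt]
      | succ n => exact (hpos n).le
    exact ⟨lt_of_le_of_lt h0 ht.1, ht.2⟩
  have hind : ∀ t ∈ Ioc (tExt tseq i) (tExt tseq (i+1)), ∀ k, (tseq k < t ↔ k < i) := by
    intro t ht k
    constructor
    · intro h
      by_contra hk
      push_neg at hk
      have h1 : tseq i ≤ tseq k := hmono.monotone hk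
      have h2 : t ≤ tseq i := ht.2
      linarith
    · intro hk
      obtain ⟨j, rfl⟩ : ∃ j, i = j + 1 := ⟨i - 1, (Nat.succ_pred_eq_of_pos (by omega)).symm⟩
      have h1 : tseq k ≤ tseq j := hmono.monotone (by omega)
      exact lt_of_le_of_lt h1 ht.1
  set Sφ := ∑' k, φ k with hSφdef
  set Sψ := ∑' k, ψ k with hSψdef
  set IΦ := ∫ s in Ioi (0:ℝ), Φ s with hIΦdef
  have hSφ0 : 0 ≤ Sφ := tsum_nonneg hφ0
  have hSψ0 : 0 ≤ Sψ := tsum_nonneg hψ0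
  have hIΦ0 : 0 ≤ IΦ := setIntegral_nonneg measurableSet_Ioi fun s _ => hΦ0 s
  set M : ℝ := |A| + |B| * T + (Sφ + Sψ * T) + T * Sψ + T * IΦ with hMdef
  have hM0 : 0 ≤ M := by positivity
  set L : ℝ := |B| + 2 * Sψ + IΦ + M + 1 with hLdef
  have hL1 : 1 ≤ L := by
    have := abs_nonneg B
    rw [hLdef]; linarith
  have hL0 : 0 < L := by linarith
  -- absolute continuity of the integral of Φ
  have hlint : ∫⁻ s, ENNReal.ofReal (Φ s) ∂(volume.restrict (Ioi (0:ℝ))) ≠ ⊤ := by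
    have h := hΦi.2
    rw [hasFiniteIntegral_iff_ofReal (ae_of_all _ hΦ0)] at h
    exact h.ne
  obtain ⟨δ', hδ'0, hδ'⟩ := exists_pos_setLIntegral_lt_of_measure_lt hlint
    (ε := ENNReal.ofReal ε) ((ENNReal.ofReal_pos.mpr hε).ne')
  obtain ⟨c, hc0, hcδ'⟩ := exists_between hδ'0
  have hc_ne_top : c ≠ ⊤ := (hcδ'.trans_le le_top).ne
  set δ₂ := c.toReal with hδ₂def
  have hδ₂0 : 0 < δ₂ := ENNReal.toReal_pos hc0.ne' hc_ne_top
  refine ⟨min δ₂ (ε / L), lt_min hδ₂0 (by positivity), ?_⟩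
  intro a b f ha hb hf hfΦ ι₁ hι₁ ι₂ hι₂ hd
  obtain ⟨hι₁0, hι₁T⟩ := hIoc ι₁ hι₁
  obtain ⟨hι₂0, hι₂T⟩ := hIoc ι₂ hι₂
  -- summability
  have habs : Summable (fun k => |b k|) :=
    hψs.of_nonneg_of_le (fun k => abs_nonneg _) hb
  have hbs : Summable b := habs.of_abs
  have hSb : |∑' k, b k| ≤ Sψ := by
    calc |∑' k, b k| ≤ ∑' k, |b k| := by
          simpa [Real.norm_eq_abs] using norm_tsum_le_tsum_norm (f := b)
            (by simpa [Real.norm_eq_abs] using habs)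
      _ ≤ Sψ := Summable.tsum_le_tsum hb habs hψs
  have hCb : |∑ k ∈ Finset.range i, b k| ≤ Sψ := by
    calc |∑ k ∈ Finset.range i, b k| ≤ ∑ k ∈ Finset.range i, |b k| :=
          Finset.abs_sum_le_sum_abs _ _
      _ ≤ ∑ k ∈ Finset.range i, ψ k := Finset.sum_le_sum fun k _ => hb k
      _ ≤ Sψ := Summable.sum_le_tsum _ (fun k _ => hψ0 k) hψs
  -- f is integrable on Ioi 0
  have hfΦ' : ∀ᵐ s ∂(volume.restrict (Ioi (0:ℝ))), ‖f s‖ ≤ Φ s := by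
    simpa [Real.norm_eq_abs] using hfΦ
  have hfI : IntegrableOn f (Ioi (0:ℝ)) :=
    Integrable.mono' hΦi hf.aestronglyMeasurable hfΦ'
  -- impS as a finite sum on the interval
  have himps : ∀ t ∈ Ioc (tExt tseq i) (tExt tseq (i+1)),
      impS tseq a b t
        = (∑ k ∈ Finset.range i, (a k + b k * (t - tseq k))) - t * ∑' k, b k := by
    intro t ht
    unfold impS
    congr 1
    have h1 : ∀ k, (if tseq k < t then a k + b k * (t - tseq k) else 0)
        = (if k ∈ Finset.range i then a k + b k * (t - tseq k) else 0) := fun k => by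
      simp only [Finset.mem_range]
      exact if_congr (hind t ht k) rfl rfl
    rw [tsum_congr h1, tsum_eq_sum (s := Finset.range i) (fun k hk => if_neg hk)]
    exact Finset.sum_congr rfl fun k hk => if_pos hk
  have himps' : ∀ t ∈ Ioc (tExt tseq i) (tExt tseq (i+1)),
      impS' tseq b t = (∑ k ∈ Finset.range i, b k) - ∑' k, b k := by
    intro t ht
    unfold impS'
    congr 1
    have h1 : ∀ k, (if tseq k < t then b k else 0)
        = (if k ∈ Finset.range i then b k else 0) := fun k => by
      simp only [Finset.mem_range]
      exact if_congr (hind t ht k) rfl rfl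
    rw [tsum_congr h1, tsum_eq_sum (s := Finset.range i) (fun k hk => if_neg hk)]
    exact Finset.sum_congr rfl fun k hk => if_pos hk
  -- integrability of the Green integrand
  have hGint : ∀ t, 0 < t → t ≤ T →
      IntegrableOn (fun s => (-(min t s)) * f s) (Ioi (0:ℝ)) := by
    intro t ht0 htT
    refine Integrable.mono' (hΦi.const_mul T)
      (((measurable_const.min measurable_id).neg.mul hf).aestronglyMeasurable) ?_
    filter_upwards [hfΦ, ae_restrict_mem measurableSet_Ioi] with s h1 h2
    have hmin0 : 0 ≤ min t s := le_min ht0.le (le_of_lt h2)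
    have hminT : min t s ≤ T := (min_le_left _ _).trans htT
    calc ‖(-(min t s)) * f s‖ = |min t s| * |f s| := by
          rw [norm_mul, Real.norm_eq_abs, Real.norm_eq_abs, abs_neg]
      _ ≤ T * Φ s := mul_le_mul (by rwa [abs_of_nonneg hmin0]) h1 (abs_nonneg _)
          (by linarith)
  -- bound on the Green part
  have hGbd : ∀ t, 0 < t → t ≤ T → |greenInt f t| ≤ T * IΦ := by
    intro t ht0 htT
    rw [← Real.norm_eq_abs, hIΦdef, ← integral_const_mul]
    refine norm_integral_le_of_norm_le (hΦi.const_mul T) ?_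
    filter_upwards [hfΦ, ae_restrict_mem measurableSet_Ioi] with s h1 h2
    have hmin0 : 0 ≤ min t s := le_min ht0.le (le_of_lt h2)
    have hminT : min t s ≤ T := (min_le_left _ _).trans htT
    calc ‖(-(min t s)) * f s‖ = |min t s| * |f s| := by
          rw [norm_mul, Real.norm_eq_abs, Real.norm_eq_abs, abs_neg]
      _ ≤ T * Φ s := mul_le_mul (by rwa [abs_of_nonneg hmin0]) h1 (abs_nonneg _)
          (by linarith)
  -- Lipschitz bound for the Green part
  have hGlip : |greenInt f ι₁ - greenInt f ι₂| ≤ |ι₁ - ι₂| * IΦ := by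
    have hsub : greenInt f ι₁ - greenInt f ι₂
        = ∫ s in Ioi (0:ℝ), ((-(min ι₁ s)) * f s - (-(min ι₂ s)) * f s) := by
      rw [integral_sub (hGint ι₁ hι₁0 hι₁T) (hGint ι₂ hι₂0 hι₂T)]
      rfl
    rw [hsub, ← Real.norm_eq_abs, hIΦdef, ← integral_const_mul]
    refine norm_integral_le_of_norm_le (hΦi.const_mul _) ?_
    filter_upwards [hfΦ] with s h1
    have heq : (-(min ι₁ s)) * f s - (-(min ι₂ s)) * f s
        = (min ι₂ s - min ι₁ s) * f s := by ring
    have hminlip : |min ι₂ s - min ι₁ s| ≤ |ι₁ - ι₂| := by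
      have := abs_min_sub_min_le_max ι₂ s ι₁ s
      simpa [abs_sub_comm ι₂ ι₁] using this
    calc ‖(-(min ι₁ s)) * f s - (-(min ι₂ s)) * f s‖
        = |min ι₂ s - min ι₁ s| * |f s| := by
          rw [heq, norm_mul, Real.norm_eq_abs, Real.norm_eq_abs]
      _ ≤ |ι₁ - ι₂| * Φ s := mul_le_mul hminlip h1 (abs_nonneg _) (abs_nonneg _)
  -- the uniform bound M on |u|
  have hMb : ∀ t ∈ Ioc (tExt tseq i) (tExt tseq (i+1)),
      |A + B * t + impS tseq a b t + greenInt f t| ≤ M := by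
    intro t ht
    obtain ⟨ht0, htT⟩ := hIoc t ht
    rw [himps t ht]
    have hsum : |∑ k ∈ Finset.range i, (a k + b k * (t - tseq k))| ≤ Sφ + Sψ * T := by
      calc |∑ k ∈ Finset.range i, (a k + b k * (t - tseq k))|
          ≤ ∑ k ∈ Finset.range i, |a k + b k * (t - tseq k)| :=
            Finset.abs_sum_le_sum_abs _ _
        _ ≤ ∑ k ∈ Finset.range i, (φ k + ψ k * T) := by
            refine Finset.sum_le_sum fun k hk => ?_
            have hki : tseq k < t := (hind t ht k).mpr (Finset.mem_range.mp hk)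
            have htk0 : 0 < tseq k := hpos k
            have habs2 : |t - tseq k| ≤ T := by
              rw [abs_of_nonneg (by linarith)]; linarith
            calc |a k + b k * (t - tseq k)| ≤ |a k| + |b k| * |t - tseq k| := by
                  rw [← abs_mul]; exact abs_add_le _ _
              _ ≤ φ k + ψ k * T :=
                  add_le_add (ha k) (mul_le_mul (hb k) habs2 (abs_nonneg _) (hψ0 k))
        _ = (∑ k ∈ Finset.range i, φ k) + (∑ k ∈ Finset.range i, ψ k) * T := by
            rw [Finset.sum_add_distrib, Finset.sum_mul]
        _ ≤ Sφ + Sψ * T := by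
            refine add_le_add (Summable.sum_le_tsum _ (fun k _ => hφ0 k) hφs) ?_
            exact mul_le_mul_of_nonneg_right (Summable.sum_le_tsum _ (fun k _ => hψ0 k) hψs) hT0.le
    have hBt : |B * t| ≤ |B| * T := by
      rw [abs_mul]
      exact mul_le_mul_of_nonneg_left (by rwa [abs_of_nonneg ht0.le]) (abs_nonneg _)
    have htSb : |t * ∑' k, b k| ≤ T * Sψ := by
      rw [abs_mul, abs_of_nonneg ht0.le]
      exact mul_le_mul htT hSb (abs_nonneg _) hT0.le
    have hG := hGbd t ht0 htT
    calc |A + B * t + ((∑ k ∈ Finset.range i, (a k + b k * (t - tseq k)))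
            - t * ∑' k, b k) + greenInt f t|
        ≤ |A| + |B * t| + |∑ k ∈ Finset.range i, (a k + b k * (t - tseq k))|
            + |t * ∑' k, b k| + |greenInt f t| := by
          have := abs_add_le (A + B * t + ((∑ k ∈ Finset.range i,
            (a k + b k * (t - tseq k))) - t * ∑' k, b k)) (greenInt f t)
          have h2 := abs_add_le (A + B * t) ((∑ k ∈ Finset.range i,
            (a k + b k * (t - tseq k))) - t * ∑' k, b k)
          have h3 := abs_add_le A (B * t)
          have h4 := abs_sub (∑ k ∈ Finset.range i, (a k + b k * (t - tseq k)))
            (t * ∑' k, b k)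
          linarith
      _ ≤ M := by rw [hMdef]; linarith
  constructor
  · -- the weighted-function part
    set u₁ := A + B * ι₁ + impS tseq a b ι₁ + greenInt f ι₁ with hu₁def
    set u₂ := A + B * ι₂ + impS tseq a b ι₂ + greenInt f ι₂ with hu₂def
    have hu : u₁ - u₂ = (B + (∑ k ∈ Finset.range i, b k) - ∑' k, b k) * (ι₁ - ι₂)
        + (greenInt f ι₁ - greenInt f ι₂) := by
      rw [hu₁def, hu₂def, himps ι₁ hι₁, himps ι₂ hι₂]
      have hsum : (∑ k ∈ Finset.range i, (a k + b k * (ι₁ - tseq k)))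
          - (∑ k ∈ Finset.range i, (a k + b k * (ι₂ - tseq k)))
          = (∑ k ∈ Finset.range i, b k) * (ι₁ - ι₂) := by
        rw [← Finset.sum_sub_distrib, Finset.sum_mul]
        exact Finset.sum_congr rfl fun k _ => by ring
      linear_combination hsum
    have hud : |u₁ - u₂| ≤ (|B| + 2 * Sψ + IΦ) * |ι₁ - ι₂| := by
      rw [hu]
      calc |(B + (∑ k ∈ Finset.range i, b k) - ∑' k, b k) * (ι₁ - ι₂)
            + (greenInt f ι₁ - greenInt f ι₂)|
          ≤ |B + (∑ k ∈ Finset.range i, b k) - ∑' k, b k| * |ι₁ - ι₂|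
            + |greenInt f ι₁ - greenInt f ι₂| := by
            rw [← abs_mul]; exact abs_add_le _ _
        _ ≤ (|B| + 2 * Sψ) * |ι₁ - ι₂| + |ι₁ - ι₂| * IΦ := by
            refine add_le_add (mul_le_mul_of_nonneg_right ?_ (abs_nonneg _)) hGlip
            have h1 := abs_add_le B (∑ k ∈ Finset.range i, b k)
            have h2 := abs_sub (B + ∑ k ∈ Finset.range i, b k) (∑' k, b k)
            linarith
        _ = (|B| + 2 * Sψ + IΦ) * |ι₁ - ι₂| := by ring
    have hkey : u₁ / (1 + ι₁) - u₂ / (1 + ι₂)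
        = (u₁ - u₂) / (1 + ι₁) + u₂ * ((ι₂ - ι₁) / ((1 + ι₁) * (1 + ι₂))) := by
      field_simp
      ring
    have h1ι₁ : (1:ℝ) ≤ 1 + ι₁ := by linarith
    have h1ι₂ : (1:ℝ) ≤ 1 + ι₂ := by linarith
    have hden : (1:ℝ) ≤ (1 + ι₁) * (1 + ι₂) := one_le_mul_of_one_le_of_one_le h1ι₁ h1ι₂
    have hu₂M : |u₂| ≤ M := hMb ι₂ hι₂
    have hE : |u₁ / (1 + ι₁) - u₂ / (1 + ι₂)| ≤ (L - 1) * |ι₁ - ι₂| := by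
      rw [hkey]
      calc |(u₁ - u₂) / (1 + ι₁) + u₂ * ((ι₂ - ι₁) / ((1 + ι₁) * (1 + ι₂)))|
          ≤ |(u₁ - u₂) / (1 + ι₁)| + |u₂ * ((ι₂ - ι₁) / ((1 + ι₁) * (1 + ι₂)))| :=
            abs_add_le _ _
        _ ≤ |u₁ - u₂| + M * |ι₁ - ι₂| := by
            refine add_le_add ?_ ?_
            · rw [abs_div]
              refine (div_le_self (abs_nonneg _) ?_)
              rw [abs_of_nonneg (by linarith)]; exact h1ι₁
            · rw [abs_mul]
              refine mul_le_mul hu₂M ?_ (abs_nonneg _) hM0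
              have hdenabs : (1:ℝ) ≤ |(1 + ι₁) * (1 + ι₂)| := by
                rw [abs_of_nonneg (by nlinarith)]; exact hden
              rw [abs_div, abs_sub_comm]
              exact div_le_self (abs_nonneg _) hdenabs
        _ ≤ (|B| + 2 * Sψ + IΦ) * |ι₁ - ι₂| + M * |ι₁ - ι₂| := by linarith
        _ = (L - 1) * |ι₁ - ι₂| := by rw [hLdef]; ring
    have hdL : |ι₁ - ι₂| < ε / L := lt_of_lt_of_le hd (min_le_right _ _)
    calc |u₁ / (1 + ι₁) - u₂ / (1 + ι₂)| ≤ (L - 1) * |ι₁ - ι₂| := hE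
      _ ≤ L * |ι₁ - ι₂| := mul_le_mul_of_nonneg_right (by linarith) (abs_nonneg _)
      _ < L * (ε / L) := mul_lt_mul_of_pos_left hdL hL0
      _ = ε := by field_simp
  · -- the derivative part
    rw [himps' ι₁ hι₁, himps' ι₂ hι₂]
    have hred : (B + ((∑ k ∈ Finset.range i, b k) - ∑' k, b k) - ∫ s in Ioi ι₁, f s)
        - (B + ((∑ k ∈ Finset.range i, b k) - ∑' k, b k) - ∫ s in Ioi ι₂, f s)
        = (∫ s in Ioi ι₂, f s) - ∫ s in Ioi ι₁, f s := by ring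
    rw [hred]
    have claim : ∀ x y : ℝ, 0 < x → y ≤ T → x ≤ y → y - x < δ₂ →
        |(∫ s in Ioi x, f s) - ∫ s in Ioi y, f s| < ε := by
      intro x y hx0 hyT hxy hyx
      have hsub : Ioc x y ⊆ Ioi (0:ℝ) := fun s hs => lt_trans hx0 hs.1
      have hsub' : Ioi y ⊆ Ioi (0:ℝ) := Ioi_subset_Ioi (by linarith)
      have hsplit : (∫ s in Ioi x, f s) = (∫ s in Ioc x y, f s) + ∫ s in Ioi y, f s := by
        rw [← setIntegral_union Ioc_disjoint_Ioi_same measurableSet_Ioi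
          (hfI.mono_set hsub) (hfI.mono_set hsub'), Ioc_union_Ioi_eq_Ioi hxy]
      rw [hsplit]
      have hstep1 : |(∫ s in Ioc x y, f s) + (∫ s in Ioi y, f s) - ∫ s in Ioi y, f s|
          = |∫ s in Ioc x y, f s| := by ring_nf
      rw [hstep1]
      have hbound : |∫ s in Ioc x y, f s| ≤ ∫ s in Ioc x y, Φ s := by
        rw [← Real.norm_eq_abs]
        exact norm_integral_le_of_norm_le (hΦi.mono_set hsub)
          (ae_restrict_of_ae_restrict_of_subset hsub hfΦ')
      refine lt_of_le_of_lt hbound ?_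
      -- the measure of `Ioc x y` is small
      have hμ : (volume.restrict (Ioi (0:ℝ))) (Ioc x y) < δ' := by
        calc (volume.restrict (Ioi (0:ℝ))) (Ioc x y)
            ≤ volume (Ioc x y) := Measure.restrict_apply_le _ _
          _ = ENNReal.ofReal (y - x) := by rw [Real.volume_Ioc]
          _ < c := by
              rw [← ENNReal.ofReal_toReal hc_ne_top]
              exact (ENNReal.ofReal_lt_ofReal_iff hδ₂0).mpr hyx
          _ < δ' := hcδ'
      have hlt := hδ' _ hμ
      rw [Measure.restrict_restrict measurableSet_Ioc, inter_eq_self_of_subset_left hsub]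
        at hlt
      have heq : (∫ s in Ioc x y, Φ s)
          = (∫⁻ s in Ioc x y, ENNReal.ofReal (Φ s)).toReal := by
        rw [integral_eq_lintegral_of_nonneg_ae (ae_of_all _ hΦ0)
          (hΦi.mono_set hsub).aestronglyMeasurable]
      rw [heq]
      exact ENNReal.toReal_lt_of_lt_ofReal hlt
    have hdδ₂ : |ι₁ - ι₂| < δ₂ := lt_of_lt_of_le hd (min_le_left _ _)
    rcases le_total ι₂ ι₁ with hle | hle
    · exact claim ι₂ ι₁ hι₂0 hι₁T hle (by rw [abs_of_nonneg (by linarith)] at hdδ₂; linarith)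
    · rw [abs_sub_comm]
      exact claim ι₁ ι₂ hι₁0 hι₂T hle (by rw [abs_of_nonpos (by linarith)] at hdδ₂; linarith)
end

section
/- Let A, B ∈ ℝ, let (t_k) be a strictly increasing sequence of positive reals with t_k → +∞, let (φ_k), (ψ_k) be nonnegative real sequences with Σφ_k < ∞ and Σψ_k < ∞, and let Φ ∈ L¹([0,∞)) be nonnegative. For real sequences (a_k), (b_k) with |a_k| ≤ φ_k, |b_k| ≤ ψ_k and measurable f with |f| ≤ Φ a.e., define u[a,b,f](t) = A + B t + Σ_{k : t_k < t} (a_k + b_k(t - t_k)) - t Σ_{k=1}^{∞} b_k + ∫₀^{+∞} G(t,s) f(s) ds. Then the family is equiconvergent at each impulsive point: for every i ∈ ℕ and every ε > 0 there exists δ > 0 such that for all admissible data (a_k), (b_k), f and all t ∈ (t_i, t_i + δ), one has |u[a,b,f](t)/(1+t) - lim_{s→t_i⁺} u[a,b,f](s)/(1+s)| < ε and |u[a,b,f]'(t) - lim_{s→t_i⁺} u[a,b,f]'(s)| < ε. -/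
open MeasureTheory Set Filter Topology

section Aux
variable {tseq : ℕ → ℝ} {i : ℕ}

lemma impS_eq (hmono : StrictMono tseq) (a b : ℕ → ℝ) {x : ℝ}
    (hx1 : tseq i < x) (hx2 : x < tseq (i+1)) :
    impS tseq a b x
      = (∑ k ∈ Finset.range (i+1), (a k + b k * (x - tseq k))) - x * ∑' k, b k := by
  unfold impS
  congr 1
  rw [tsum_eq_sum (s := Finset.range (i+1)) ?_]
  · exact Finset.sum_congr rfl fun k hk => if_pos
      (lt_of_le_of_lt (hmono.monotone (Nat.lt_succ_iff.mp (Finset.mem_range.mp hk))) hx1)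
  · intro k hk
    rw [if_neg]
    push_neg
    have hik : i + 1 ≤ k := le_of_not_gt fun h => hk (Finset.mem_range.mpr h)
    exact le_trans hx2.le (hmono.monotone hik)

lemma impS'_eq (hmono : StrictMono tseq) (b : ℕ → ℝ) {x : ℝ}
    (hx1 : tseq i < x) (hx2 : x < tseq (i+1)) :
    impS' tseq b x = (∑ k ∈ Finset.range (i+1), b k) - ∑' k, b k := by
  unfold impS'
  congr 1
  rw [tsum_eq_sum (s := Finset.range (i+1)) ?_]
  · exact Finset.sum_congr rfl fun k hk => if_pos
      (lt_of_le_of_lt (hmono.monotone (Nat.lt_succ_iff.mp (Finset.mem_range.mp hk))) hx1)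
  · intro k hk
    rw [if_neg]
    push_neg
    have hik : i + 1 ≤ k := le_of_not_gt fun h => hk (Finset.mem_range.mpr h)
    exact le_trans hx2.le (hmono.monotone hik)

end Aux

set_option maxHeartbeats 1000000 in
/-- The family
`u[a,b,f](t) = A + Bt + Σ_{k : t_k < t}(a_k + b_k(t-t_k)) - t Σ_k b_k + ∫₀^∞ G(t,s)f(s)ds`,
over admissible data with `|a_k| ≤ φ_k`, `|b_k| ≤ ψ_k`, `|f| ≤ Φ` a.e., is equiconvergent
at each impulsive point: for every `i` and `ε > 0` there is `δ > 0` such that for all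
admissible data and all `t ∈ (t_i, t_i + δ)`, the weighted function and the derivative
are `ε`-close to their right limits at `t_i`. -/
theorem equiconvergence_at_impulse_points
    (A B : ℝ) (tseq φ ψ : ℕ → ℝ)
    (hmono : StrictMono tseq) (hpos : ∀ k, 0 < tseq k)
    (htop : Tendsto tseq atTop atTop)
    (hφ0 : ∀ k, 0 ≤ φ k) (hψ0 : ∀ k, 0 ≤ ψ k)
    (hφs : Summable φ) (hψs : Summable ψ)
    (Φ : ℝ → ℝ) (hΦ0 : ∀ s, 0 ≤ Φ s) (hΦi : IntegrableOn Φ (Ioi (0:ℝ))) :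
    ∀ i : ℕ, ∀ ε > (0:ℝ), ∃ δ > (0:ℝ), ∀ a b : ℕ → ℝ, ∀ f : ℝ → ℝ,
      (∀ k, |a k| ≤ φ k) → (∀ k, |b k| ≤ ψ k) → Measurable f →
      (∀ᵐ s ∂(volume.restrict (Ioi (0:ℝ))), |f s| ≤ Φ s) →
      ∀ L L' : ℝ,
        Tendsto (fun s : ℝ => (A + B * s + impS tseq a b s + greenInt f s) / (1 + s))
          (𝓝[>] (tseq i)) (𝓝 L) →
        Tendsto (fun s : ℝ => B + impS' tseq b s - ∫ r in Ioi s, f r)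
          (𝓝[>] (tseq i)) (𝓝 L') →
        ∀ t ∈ Ioo (tseq i) (tseq i + δ),
          |(A + B * t + impS tseq a b t + greenInt f t) / (1 + t) - L| < ε ∧
          |(B + impS' tseq b t - ∫ r in Ioi t, f r) - L'| < ε := by
  intro i ε hε
  set ti := tseq i with hti_def
  set T := tseq (i+1) with hT_def
  have htiT : ti < T := hmono (Nat.lt_succ_self i)
  have hti0 : 0 < ti := hpos i
  have hT0 : 0 < T := lt_trans hti0 htiT
  -- constants
  set Sφ := ∑' k, φ k with hSφ_def
  set Sψ := ∑' k, ψ k with hSψ_def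
  have hSφ0 : 0 ≤ Sφ := tsum_nonneg hφ0
  have hSψ0 : 0 ≤ Sψ := tsum_nonneg hψ0
  set IΦ := ∫ s in Ioi (0:ℝ), Φ s with hIΦ_def
  have hIΦ0 : 0 ≤ IΦ := setIntegral_nonneg measurableSet_Ioi fun s _ => hΦ0 s
  set K1 : ℝ := |B| + 2*Sψ + IΦ with hK1_def
  have hK10 : 0 ≤ K1 := by positivity
  set M : ℝ := |A| + |B| *T + (Sφ + 2*T*Sψ) + T*IΦ with hM_def
  have hM0 : 0 ≤ M := by positivity
  set K : ℝ := K1*(1+T) + M + 1 with hK_def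
  have hK0 : 0 < K := by positivity
  -- absolute continuity: small δ₂ for the tail integral of Φ
  obtain ⟨δ₂, hδ₂0, hδ₂⟩ : ∃ δ₂ > (0:ℝ), ∀ x, ti < x → x ≤ ti + δ₂ →
      (∫ r in Ioc ti x, Φ r) < ε/2 := by
    have hIcc : IntegrableOn Φ (Icc ti T) :=
      hΦi.mono_set fun y hy => lt_of_lt_of_le hti0 hy.1
    have hcont : ContinuousOn (fun x => ∫ r in Ioc ti x, Φ r) (Icc ti T) :=
      intervalIntegral.continuousOn_primitive hIcc
    have h0 : Tendsto (fun x => ∫ r in Ioc ti x, Φ r) (𝓝[Icc ti T] ti) (𝓝 0) := by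
      have h := hcont ti (left_mem_Icc.mpr htiT.le)
      simpa [ContinuousWithinAt, Ioc_self] using h
    have hev : {x : ℝ | (∫ r in Ioc ti x, Φ r) < ε/2} ∈ 𝓝[Icc ti T] ti :=
      h0 (Iio_mem_nhds (by linarith))
    obtain ⟨U, hUo, htiU, hUsub⟩ := mem_nhdsWithin.mp hev
    obtain ⟨r, hr0, hball⟩ := Metric.isOpen_iff.mp hUo ti htiU
    refine ⟨min (r/2) ((T - ti)/2), lt_min (by linarith) (by linarith), ?_⟩
    intro x hx1 hx2
    have hx2' : x ≤ ti + r/2 := le_trans hx2 (by linarith [min_le_left (r/2) ((T-ti)/2)])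
    have hx3 : x ≤ T := le_trans hx2 (by linarith [min_le_right (r/2) ((T-ti)/2)])
    have hxU : x ∈ U := by
      apply hball
      rw [Metric.mem_ball, Real.dist_eq, abs_of_pos (by linarith)]
      linarith
    exact hUsub ⟨hxU, hx1.le, hx3⟩
  -- final δ
  refine ⟨min δ₂ (min ((T - ti)/2) (ε/(2*K))),
    lt_min hδ₂0 (lt_min (by linarith) (by positivity)), ?_⟩
  set δ := min δ₂ (min ((T - ti)/2) (ε/(2*K))) with hδ_def
  have hδδ₂ : δ ≤ δ₂ := min_le_left _ _
  have hδT : δ ≤ (T - ti)/2 := le_trans (min_le_right _ _) (min_le_left _ _)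
  have hδK : δ ≤ ε/(2*K) := le_trans (min_le_right _ _) (min_le_right _ _)
  intro a b f ha hb hf hfΦ L L' hL hL' t ht
  obtain ⟨ht1, ht2⟩ := ht
  have htT : t < T := by linarith
  have ht0 : 0 < t := lt_trans hti0 ht1
  -- summability facts
  have hbsum : Summable b :=
    Summable.of_norm_bounded hψs fun k => by simpa [Real.norm_eq_abs] using hb k
  have hasum : Summable a :=
    Summable.of_norm_bounded hφs fun k => by simpa [Real.norm_eq_abs] using ha k
  have habs : |∑' k, b k| ≤ Sψ := by
    have h1 : ‖∑' k, b k‖ ≤ ∑' k, ‖b k‖ := norm_tsum_le_tsum_norm hbsum.norm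
    have h2 : (∑' k, ‖b k‖) ≤ Sψ := by
      refine Summable.tsum_le_tsum (fun k => ?_) hbsum.norm hψs
      simpa [Real.norm_eq_abs] using hb k
    rw [Real.norm_eq_abs] at h1
    exact h1.trans h2
  have hfinb : |∑ k ∈ Finset.range (i+1), b k| ≤ Sψ := by
    calc |∑ k ∈ Finset.range (i+1), b k| ≤ ∑ k ∈ Finset.range (i+1), |b k| :=
          Finset.abs_sum_le_sum_abs _ _
      _ ≤ ∑ k ∈ Finset.range (i+1), ψ k := Finset.sum_le_sum fun k _ => hb k
      _ ≤ Sψ := Summable.sum_le_tsum _ (fun k _ => hψ0 k) hψs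
  -- integrability of f
  have hf_int : IntegrableOn f (Ioi (0:ℝ)) :=
    hΦi.mono' hf.aestronglyMeasurable (by simpa [Real.norm_eq_abs] using hfΦ)
  -- integrability of green integrand
  have hgi : ∀ x : ℝ, 0 ≤ x → x ≤ T →
      Integrable (fun s => (-(min x s)) * f s) (volume.restrict (Ioi (0:ℝ))) := by
    intro x hx0 hxT
    apply Integrable.mono' (hΦi.const_mul T)
      (((measurable_const.min measurable_id).neg.mul hf).aestronglyMeasurable)
    filter_upwards [hfΦ, ae_restrict_mem measurableSet_Ioi] with s hs hs0
    show ‖(-(min x s)) * f s‖ ≤ T * Φ s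
    rw [Real.norm_eq_abs, abs_mul, abs_neg]
    have h1 : |min x s| ≤ T := by
      rw [abs_of_nonneg (le_min hx0 (le_of_lt hs0))]
      exact le_trans (min_le_left _ _) hxT
    exact mul_le_mul h1 hs (abs_nonneg _) (by linarith)
  -- green difference bound
  have hgdiff : ∀ x y : ℝ, 0 ≤ x → x ≤ T → 0 ≤ y → y ≤ T →
      |greenInt f x - greenInt f y| ≤ |x - y| * IΦ := by
    intro x y hx0 hxT hy0 hyT
    unfold greenInt
    rw [← integral_sub (hgi x hx0 hxT) (hgi y hy0 hyT)]
    have step1 : |∫ s in Ioi (0:ℝ), ((-(min x s)) * f s - (-(min y s)) * f s)| ≤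
        ∫ s in Ioi (0:ℝ), |(-(min x s)) * f s - (-(min y s)) * f s| := by
      simpa [Real.norm_eq_abs] using
        norm_integral_le_integral_norm (fun s => (-(min x s)) * f s - (-(min y s)) * f s)
          (μ := volume.restrict (Ioi (0:ℝ)))
    refine le_trans step1 ?_
    have step2 : (∫ s in Ioi (0:ℝ), |(-(min x s)) * f s - (-(min y s)) * f s|) ≤
        ∫ s in Ioi (0:ℝ), |x - y| * Φ s := by
      apply integral_mono_ae ((hgi x hx0 hxT).sub (hgi y hy0 hyT)).abs
        (hΦi.const_mul _)
      filter_upwards [hfΦ] with s hs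
      simp only [Pi.sub_apply]
      have e1 : (-(min x s)) * f s - (-(min y s)) * f s = (min y s - min x s) * f s := by ring
      rw [e1, abs_mul]
      have h2 : |min y s - min x s| ≤ |x - y| := by
        have := abs_min_sub_min_le_max y s x s
        simpa [abs_sub_comm y x] using this
      exact mul_le_mul h2 hs (abs_nonneg _) (abs_nonneg _)
    refine le_trans step2 ?_
    rw [integral_const_mul]
  -- greenInt at 0 is 0
  have hg0 : greenInt f 0 = 0 := by
    unfold greenInt
    rw [setIntegral_congr_fun measurableSet_Ioi (g := fun _ => (0:ℝ))]
    · simp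
    · intro s hs
      simp [min_eq_left (le_of_lt (mem_Ioi.mp hs))]
  -- bound on U
  set U : ℝ → ℝ := fun x => A + B * x + impS tseq a b x + greenInt f x with hU_def
  have hUb : ∀ x : ℝ, ti < x → x < T → |U x| ≤ M := by
    intro x hx1 hx2
    have hx0 : 0 < x := lt_trans hti0 hx1
    have hxT : x ≤ T := hx2.le
    have himps : |impS tseq a b x| ≤ Sφ + 2*T*Sψ := by
      rw [impS_eq hmono a b hx1 hx2]
      have h1 : |∑ k ∈ Finset.range (i+1), (a k + b k * (x - tseq k))| ≤ Sφ + T*Sψ := by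
        calc |∑ k ∈ Finset.range (i+1), (a k + b k * (x - tseq k))|
            ≤ ∑ k ∈ Finset.range (i+1), |a k + b k * (x - tseq k)| :=
              Finset.abs_sum_le_sum_abs _ _
          _ ≤ ∑ k ∈ Finset.range (i+1), (φ k + ψ k * T) := by
              apply Finset.sum_le_sum
              intro k hk
              refine le_trans (abs_add_le _ _) (add_le_add (ha k) ?_)
              rw [abs_mul]
              have hk0 : 0 < tseq k := hpos k
              have hki : tseq k ≤ ti := hmono.monotone (Nat.lt_succ_iff.mp (Finset.mem_range.mp ‹k ∈ Finset.range (i+1)›))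
              have hxk : |x - tseq k| ≤ T := by
                rw [abs_of_nonneg (by linarith)]
                linarith
              exact mul_le_mul (hb k) hxk (abs_nonneg _) (hψ0 k)
          _ ≤ Sφ + T*Sψ := by
              rw [Finset.sum_add_distrib, ← Finset.sum_mul]
              have := Summable.sum_le_tsum (Finset.range (i+1)) (fun k _ => hφ0 k) hφs
              have := Summable.sum_le_tsum (Finset.range (i+1)) (fun k _ => hψ0 k) hψs
              nlinarith [Finset.sum_nonneg (fun k (_ : k ∈ Finset.range (i+1)) => hψ0 k)]
      have h2 : |x * ∑' k, b k| ≤ T * Sψ := by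
        rw [abs_mul, abs_of_pos hx0]
        exact mul_le_mul hxT habs (abs_nonneg _) (by linarith)
      calc |(∑ k ∈ Finset.range (i+1), (a k + b k * (x - tseq k))) - x * ∑' k, b k|
          ≤ |∑ k ∈ Finset.range (i+1), (a k + b k * (x - tseq k))| + |x * ∑' k, b k| :=
            abs_sub _ _
        _ ≤ Sφ + T*Sψ + T*Sψ := add_le_add h1 h2
        _ = Sφ + 2*T*Sψ := by ring
    have hgreen : |greenInt f x| ≤ T*IΦ := by
      have := hgdiff x 0 hx0.le hxT le_rfl hT0.le
      rw [hg0, sub_zero, sub_zero, abs_of_pos hx0] at this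
      exact le_trans this (by nlinarith)
    calc |U x| ≤ |A| + |B * x| + |impS tseq a b x| + |greenInt f x| := by
          rw [hU_def]
          exact le_trans (abs_add_le _ _) (add_le_add (le_trans (abs_add_le _ _)
            (add_le_add (abs_add_le _ _) le_rfl)) le_rfl)
      _ ≤ |A| + |B| *T + (Sφ + 2*T*Sψ) + T*IΦ := by
          rw [abs_mul, abs_of_pos hx0]
          exact add_le_add (add_le_add (add_le_add le_rfl
            (mul_le_mul le_rfl hxT hx0.le (abs_nonneg _))) himps) hgreen
      _ = M := rfl
  -- U difference bound
  have hUdiff : ∀ x y : ℝ, ti < x → x < T → ti < y → y < T →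
      |U x - U y| ≤ K1 * |x - y| := by
    intro x y hx1 hx2 hy1 hy2
    have hx0 : 0 < x := lt_trans hti0 hx1
    have hy0 : 0 < y := lt_trans hti0 hy1
    have himps : impS tseq a b x - impS tseq a b y
        = (x - y) * ((∑ k ∈ Finset.range (i+1), b k) - ∑' k, b k) := by
      rw [impS_eq hmono a b hx1 hx2, impS_eq hmono a b hy1 hy2]
      have e1 : ∀ z : ℝ, (∑ k ∈ Finset.range (i+1), (a k + b k * (z - tseq k)))
          = (∑ k ∈ Finset.range (i+1), (a k - b k * tseq k))
            + (∑ k ∈ Finset.range (i+1), b k) * z := by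
        intro z
        rw [Finset.sum_mul, ← Finset.sum_add_distrib]
        exact Finset.sum_congr rfl fun k _ => by ring
      rw [e1 x, e1 y]
      ring
    have h1 : |impS tseq a b x - impS tseq a b y| ≤ |x - y| * (2*Sψ) := by
      rw [himps, abs_mul]
      refine mul_le_mul le_rfl (le_trans (abs_sub _ _) ?_) (abs_nonneg _) (abs_nonneg _)
      linarith [hfinb, habs]
    have h2 : |greenInt f x - greenInt f y| ≤ |x - y| * IΦ :=
      hgdiff x y hx0.le hx2.le hy0.le hy2.le
    have e2 : U x - U y = B*(x - y) + (impS tseq a b x - impS tseq a b y)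
        + (greenInt f x - greenInt f y) := by rw [hU_def]; ring
    calc |U x - U y| ≤ |B*(x-y)| + |impS tseq a b x - impS tseq a b y|
          + |greenInt f x - greenInt f y| := by
          rw [e2]
          exact le_trans (abs_add_le _ _) (add_le_add (abs_add_le _ _) le_rfl)
      _ ≤ |B| * |x-y| + |x - y| *(2*Sψ) + |x-y| *IΦ := by
          rw [abs_mul]; exact add_le_add (add_le_add le_rfl h1) h2
      _ = K1 * |x - y| := by rw [hK1_def]; ring
  -- weighted function g
  set g : ℝ → ℝ := fun x => U x / (1 + x) with hg_def
  have hgdiff2 : ∀ x y : ℝ, ti < x → x < T → ti < y → y < T →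
      |g x - g y| ≤ K * |x - y| := by
    intro x y hx1 hx2 hy1 hy2
    have hx0 : 0 < x := lt_trans hti0 hx1
    have hy0 : 0 < y := lt_trans hti0 hy1
    have h1x : (0:ℝ) < 1 + x := by linarith
    have h1y : (0:ℝ) < 1 + y := by linarith
    have e : g x - g y = ((U x - U y)*(1+y) + U y*(y - x)) / ((1+x)*(1+y)) := by
      rw [hg_def]
      field_simp
      ring
    rw [e, abs_div]
    have hd : (1:ℝ) ≤ |(1+x)*(1+y)| := by
      rw [abs_of_pos (by positivity)]
      nlinarith
    have hnum : |(U x - U y)*(1+y) + U y*(y - x)| ≤ K * |x - y| := by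
      calc |(U x - U y)*(1+y) + U y*(y - x)|
          ≤ |(U x - U y)*(1+y)| + |U y*(y-x)| := abs_add_le _ _
        _ ≤ K1* |x-y| *(1+T) + M* |x-y| := by
            rw [abs_mul, abs_mul]
            refine add_le_add (mul_le_mul (hUdiff x y hx1 hx2 hy1 hy2) ?_ (abs_nonneg _) (by positivity)) ?_
            · rw [abs_of_pos h1y]; linarith
            · rw [abs_sub_comm y x]
              exact mul_le_mul (hUb y hy1 hy2) le_rfl (abs_nonneg _) hM0
        _ ≤ K * |x - y| := by rw [hK_def]; nlinarith [abs_nonneg (x - y)]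
    exact le_trans (div_le_self (abs_nonneg _) hd) hnum
  -- derivative difference
  set D : ℝ → ℝ := fun x => B + impS' tseq b x - ∫ r in Ioi x, f r with hD_def
  have hDdiff : ∀ y : ℝ, ti < y → y < t → D t - D y = ∫ r in Ioc y t, f r := by
    intro y hy1 hy2
    have hy0 : 0 < y := lt_trans hti0 hy1
    have hyT : y < T := lt_trans hy2 htT
    have hint1 : IntegrableOn f (Ioc y t) := hf_int.mono_set fun r hr => lt_trans hy0 hr.1
    have hint2 : IntegrableOn f (Ioi t) := hf_int.mono_set (Ioi_subset_Ioi ht0.le)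
    have hsplit : (∫ r in Ioi y, f r) = (∫ r in Ioc y t, f r) + ∫ r in Ioi t, f r := by
      rw [← setIntegral_union (Ioc_disjoint_Ioi le_rfl) measurableSet_Ioi hint1 hint2,
        Ioc_union_Ioi_eq_Ioi hy2.le]
    rw [hD_def]
    simp only
    rw [impS'_eq hmono b ht1 htT, impS'_eq hmono b hy1 hyT]
    linarith
  -- bound for the tail integral over Ioc y t
  have hDbound : ∀ y : ℝ, ti < y → y < t → |∫ r in Ioc y t, f r| ≤ ∫ r in Ioc ti t, Φ r := by
    intro y hy1 hy2
    have hy0 : 0 < y := lt_trans hti0 hy1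
    have hsub : Ioc y t ⊆ Ioi (0:ℝ) := fun r hr => lt_trans hy0 hr.1
    have hsub2 : Ioc ti t ⊆ Ioi (0:ℝ) := fun r hr => lt_trans hti0 hr.1
    have hint1 : IntegrableOn f (Ioc y t) := hf_int.mono_set hsub
    calc |∫ r in Ioc y t, f r| ≤ ∫ r in Ioc y t, |f r| := by
          simpa [Real.norm_eq_abs] using norm_integral_le_integral_norm f
            (μ := volume.restrict (Ioc y t))
      _ ≤ ∫ r in Ioc y t, Φ r := by
          apply integral_mono_ae hint1.abs (hΦi.mono_set hsub)
          exact ae_restrict_of_ae_restrict_of_subset hsub hfΦ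
      _ ≤ ∫ r in Ioc ti t, Φ r := by
          apply setIntegral_mono_set (hΦi.mono_set hsub2)
          · exact Eventually.of_forall fun r => hΦ0 r
          · exact HasSubset.Subset.eventuallyLE (Ioc_subset_Ioc_left hy1.le)
  -- conclude
  constructor
  · -- weighted part
    have hevent : ∀ᶠ s in 𝓝[>] ti, |g t - g s| ≤ ε/2 := by
      filter_upwards [Ioo_mem_nhdsGT ht1] with s hs
      have h := hgdiff2 t s ht1 htT (hs.1) (lt_trans hs.2 htT)
      have hts : |t - s| ≤ δ := by
        rw [abs_of_pos (by linarith [hs.2])]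
        linarith [hs.1, hs.2]
      have hδ0' : (0:ℝ) ≤ δ := le_trans (abs_nonneg _) hts
      calc |g t - g s| ≤ K * |t - s| := h
        _ ≤ K * δ := mul_le_mul le_rfl hts (abs_nonneg _) hK0.le
        _ ≤ K * (ε/(2*K)) := mul_le_mul le_rfl hδK hδ0' hK0.le
        _ = ε/2 := by field_simp
    have htend : Tendsto (fun s => |g t - g s|) (𝓝[>] ti) (𝓝 |g t - L|) :=
      (tendsto_const_nhds.sub hL).abs
    have hle : |g t - L| ≤ ε/2 := le_of_tendsto htend hevent
    calc |g t - L| ≤ ε/2 := hle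
      _ < ε := by linarith
  · -- derivative part
    have hc : (∫ r in Ioc ti t, Φ r) < ε/2 := hδ₂ t ht1 (by linarith)
    have hevent : ∀ᶠ s in 𝓝[>] ti, |D t - D s| ≤ ∫ r in Ioc ti t, Φ r := by
      filter_upwards [Ioo_mem_nhdsGT ht1] with s hs
      rw [hDdiff s hs.1 hs.2]
      exact hDbound s hs.1 hs.2
    have htend : Tendsto (fun s => |D t - D s|) (𝓝[>] ti) (𝓝 |D t - L'|) :=
      (tendsto_const_nhds.sub hL').abs
    have hle : |D t - L'| ≤ ∫ r in Ioc ti t, Φ r := le_of_tendsto htend hevent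
    calc |D t - L'| ≤ ∫ r in Ioc ti t, Φ r := hle
      _ < ε/2 := hc
      _ < ε := by linarith
end

section
/- Let A, B ∈ ℝ, let (t_k) be a strictly increasing sequence of positive reals with t_k → +∞, let (φ_k), (ψ_k) be nonnegative real sequences with Σφ_k < ∞ and Σψ_k < ∞, and let Φ ∈ L¹([0,∞)) be nonnegative. For real sequences (a_k), (b_k) with |a_k| ≤ φ_k, |b_k| ≤ ψ_k and measurable f with |f| ≤ Φ a.e., define u[a,b,f](t) = A + B t + Σ_{k : t_k < t} (a_k + b_k(t - t_k)) - t Σ_{k=1}^{∞} b_k + ∫₀^{+∞} G(t,s) f(s) ds. Then the family is equiconvergent at infinity: for every ε > 0 there exists T > 0 such that for all admissible data (a_k), (b_k), f and all t ≥ T with t ∉ {t_k}, one has |u[a,b,f](t)/(1+t) - B| < ε and |u[a,b,f]'(t) - B| < ε. -/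
open MeasureTheory Set Filter Topology

/-- Tail integrals of an integrable nonnegative function are eventually small. -/
lemma exists_tail_integral_lt (Φ : ℝ → ℝ) (hΦ0 : ∀ s, 0 ≤ Φ s)
    (hΦi : IntegrableOn Φ (Ioi (0:ℝ))) {δ : ℝ} (hδ : 0 < δ) :
    ∃ R > (0:ℝ), ∫ s in Ioi R, Φ s < δ := by
  have h := MeasureTheory.intervalIntegral_tendsto_integral_Ioi (μ := volume) (b := id)
    (f := Φ) 0 hΦi tendsto_id
  have h2 : ∀ᶠ R in (atTop : Filter ℝ),
      (∫ s in Ioi (0:ℝ), Φ s) - δ < ∫ x in (0:ℝ)..(id R), Φ x :=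
    h.eventually (eventually_gt_nhds (by linarith))
  obtain ⟨R, hR1, hR2⟩ := (h2.and (eventually_gt_atTop 0)).exists
  refine ⟨R, hR2, ?_⟩
  have hsplit : ∫ s in Ioi (0:ℝ), Φ s = (∫ s in Ioc 0 R, Φ s) + ∫ s in Ioi R, Φ s := by
    rw [← setIntegral_union (Ioc_disjoint_Ioi le_rfl) measurableSet_Ioi
      (hΦi.mono_set Ioc_subset_Ioi_self) (hΦi.mono_set (Ioi_subset_Ioi hR2.le)),
      Ioc_union_Ioi_eq_Ioi hR2.le]
  simp only [id_eq] at hR1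
  rw [intervalIntegral.integral_of_le hR2.le] at hR1
  linarith

set_option maxHeartbeats 1000000 in
/-- The family
`u[a,b,f](t) = A + Bt + Σ_{k : t_k < t}(a_k + b_k(t-t_k)) - t Σ_k b_k + ∫₀^∞ G(t,s)f(s)ds`,
over admissible data with `|a_k| ≤ φ_k`, `|b_k| ≤ ψ_k`, `|f| ≤ Φ` a.e., is equiconvergent
at infinity: for every `ε > 0` there is `T > 0` such that for all admissible data and all
`t ≥ T` with `t ∉ {t_k}`, `|u(t)/(1+t) - B| < ε` and `|u'(t) - B| < ε`. -/
theorem equiconvergence_at_infinity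
    (A B : ℝ) (tseq φ ψ : ℕ → ℝ)
    (hmono : StrictMono tseq) (hpos : ∀ k, 0 < tseq k)
    (htop : Tendsto tseq atTop atTop)
    (hφ0 : ∀ k, 0 ≤ φ k) (hψ0 : ∀ k, 0 ≤ ψ k)
    (hφs : Summable φ) (hψs : Summable ψ)
    (Φ : ℝ → ℝ) (hΦ0 : ∀ s, 0 ≤ Φ s) (hΦi : IntegrableOn Φ (Ioi (0:ℝ))) :
    ∀ ε > (0:ℝ), ∃ T > (0:ℝ), ∀ a b : ℕ → ℝ, ∀ f : ℝ → ℝ,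
      (∀ k, |a k| ≤ φ k) → (∀ k, |b k| ≤ ψ k) → Measurable f →
      (∀ᵐ s ∂(volume.restrict (Ioi (0:ℝ))), |f s| ≤ Φ s) →
      ∀ t : ℝ, T ≤ t → t ∉ range tseq →
        |(A + B * t + impS tseq a b t + greenInt f t) / (1 + t) - B| < ε ∧
        |(B + impS' tseq b t - ∫ s in Ioi t, f s) - B| < ε := by
  intro ε hε
  set δ := ε / 4 with hδdef
  have hδ : 0 < δ := by positivity
  -- choose N with small ψ-tail
  obtain ⟨N, hN⟩ : ∃ N : ℕ, ∑' i, ψ (i + N) < δ := by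
    have h := (tendsto_sum_nat_add ψ).eventually (eventually_lt_nhds hδ)
    exact h.exists
  -- choose R with small Φ-tail
  obtain ⟨R, hR0, hR⟩ := exists_tail_integral_lt Φ hΦ0 hΦi hδ
  -- constants
  set Cφ : ℝ := ∑' k, φ k with hCφ
  set CN : ℝ := ∑ k ∈ Finset.range N, ψ k * tseq k with hCN
  set CΦ : ℝ := ∫ s in Ioi (0:ℝ), Φ s with hCΦ
  have hCφ0 : 0 ≤ Cφ := tsum_nonneg hφ0
  have hCN0 : 0 ≤ CN := Finset.sum_nonneg fun k _ => mul_nonneg (hψ0 k) (hpos k).le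
  have hCΦ0 : 0 ≤ CΦ := setIntegral_nonneg measurableSet_Ioi fun s _ => hΦ0 s
  set M : ℝ := |A - B| + Cφ + CN + R * CΦ with hM
  have hM0 : 0 ≤ M := by positivity
  refine ⟨max (max R (tseq N)) (M / δ + 1), ?_, ?_⟩
  · exact lt_of_lt_of_le hR0 (le_max_of_le_left (le_max_left _ _))
  intro a b f ha hb hfm hfΦ t ht _
  have hRt : R ≤ t := le_trans (le_max_of_le_left (le_max_left _ _)) ht
  have htN : tseq N ≤ t := le_trans (le_max_of_le_left (le_max_right _ _)) ht
  have hMδt : M / δ + 1 ≤ t := le_trans (le_max_right _ _) ht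
  have ht0 : 0 < t := lt_of_lt_of_le hR0 hRt
  have h1t : (0:ℝ) < 1 + t := by linarith
  have hMt : M ≤ δ * (1 + t) := by
    have : M / δ ≤ t - 1 := by linarith
    have := (div_le_iff₀ hδ).mp this
    nlinarith
  -- basic summabilities
  have hsb : Summable b :=
    (Summable.of_nonneg_of_le (fun k => abs_nonneg _) hb hψs).of_abs
  have hψt : Summable fun k => ψ k * t := hψs.mul_right t
  have hsmin : Summable fun k => ψ k * min t (tseq k) := by
    refine Summable.of_nonneg_of_le (fun k => mul_nonneg (hψ0 k)
      (le_min ht0.le (hpos k).le)) (fun k => ?_) hψt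
    exact mul_le_mul_of_nonneg_left (min_le_left _ _) (hψ0 k)
  have hsφmin : Summable fun k => φ k + ψ k * min t (tseq k) := hφs.add hsmin
  -- the combined impulsive term
  set d : ℕ → ℝ := fun k =>
    (if tseq k < t then a k + b k * (t - tseq k) else 0) - t * b k with hd_def
  have hd : ∀ k, |d k| ≤ φ k + ψ k * min t (tseq k) := by
    intro k
    by_cases h : tseq k < t
    · have hmin : min t (tseq k) = tseq k := min_eq_right h.le
      have : d k = a k - b k * tseq k := by simp only [hd_def, if_pos h]; ring
      rw [this, hmin]
      calc |a k - b k * tseq k| ≤ |a k| + |b k * tseq k| := abs_sub _ _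
        _ ≤ φ k + ψ k * tseq k := by
            refine add_le_add (ha k) ?_
            rw [abs_mul, abs_of_pos (hpos k)]
            exact mul_le_mul_of_nonneg_right (hb k) (hpos k).le
    · have hmin : min t (tseq k) = t := min_eq_left (not_lt.mp h)
      have : d k = -(t * b k) := by simp only [hd_def, if_neg h]; ring
      rw [this, hmin, abs_neg, abs_mul, abs_of_pos ht0]
      have : t * |b k| ≤ ψ k * t := by
        rw [mul_comm]; exact mul_le_mul_of_nonneg_right (hb k) ht0.le
      nlinarith [hφ0 k, abs_nonneg (b k)]
  have hsd_abs : Summable fun k => |d k| :=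
    Summable.of_nonneg_of_le (fun k => abs_nonneg _) hd hsφmin
  have hsd : Summable d := hsd_abs.of_abs
  have hsg : Summable fun k => if tseq k < t then a k + b k * (t - tseq k) else 0 := by
    have : (fun k => if tseq k < t then a k + b k * (t - tseq k) else 0)
        = fun k => d k + t * b k := by
      funext k; simp only [hd_def]; ring
    rw [this]; exact hsd.add (hsb.mul_left t)
  have himps : impS tseq a b t = ∑' k, d k := by
    unfold impS
    rw [← tsum_mul_left, ← Summable.tsum_sub hsg (hsb.mul_left t)]
  -- bound on impS
  have hSbound : |impS tseq a b t| ≤ Cφ + CN + δ * t := by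
    rw [himps]
    have h1 : |∑' k, d k| ≤ ∑' k, |d k| := by
      simpa [Real.norm_eq_abs] using norm_tsum_le_tsum_norm (f := d) (by simpa using hsd_abs)
    have h2 : ∑' k, |d k| ≤ ∑' k, (φ k + ψ k * min t (tseq k)) :=
      Summable.tsum_le_tsum hd hsd_abs hsφmin
    have h3 : ∑' k, (φ k + ψ k * min t (tseq k)) = Cφ + ∑' k, ψ k * min t (tseq k) :=
      Summable.tsum_add hφs hsmin
    have hsmin_tail : Summable fun i => ψ (i + N) * min t (tseq (i + N)) :=
      (summable_nat_add_iff N).2 hsmin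
    have hψ_tail : Summable fun i => ψ (i + N) := (summable_nat_add_iff N).2 hψs
    have h4 : ∑' k, ψ k * min t (tseq k)
        = (∑ k ∈ Finset.range N, ψ k * min t (tseq k))
          + ∑' i, ψ (i + N) * min t (tseq (i + N)) := (Summable.sum_add_tsum_nat_add N hsmin).symm
    have h5 : (∑ k ∈ Finset.range N, ψ k * min t (tseq k)) ≤ CN := by
      refine Finset.sum_le_sum fun k _ => ?_
      exact mul_le_mul_of_nonneg_left (min_le_right _ _) (hψ0 k)
    have h6 : ∑' i, ψ (i + N) * min t (tseq (i + N)) ≤ δ * t := by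
      have : ∑' i, ψ (i + N) * min t (tseq (i + N)) ≤ ∑' i, ψ (i + N) * t := by
        refine Summable.tsum_le_tsum (fun i => ?_) hsmin_tail (hψ_tail.mul_right t)
        exact mul_le_mul_of_nonneg_left (min_le_left _ _) (hψ0 _)
      rw [tsum_mul_right] at this
      calc ∑' i, ψ (i + N) * min t (tseq (i + N)) ≤ (∑' i, ψ (i + N)) * t := this
        _ ≤ δ * t := mul_le_mul_of_nonneg_right hN.le ht0.le
    linarith
  -- Green part
  have hΦtail : ∀ u : ℝ, R ≤ u → ∫ s in Ioi u, Φ s < δ := by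
    intro u hu
    refine lt_of_le_of_lt ?_ hR
    exact setIntegral_mono_set (hΦi.mono_set (Ioi_subset_Ioi hR0.le))
      (Filter.Eventually.of_forall fun s => hΦ0 s)
      (HasSubset.Subset.eventuallyLE (Ioi_subset_Ioi hu))
  have hminmeas : Measurable fun s : ℝ => -(min t s) * f s :=
    ((measurable_const.min measurable_id).neg).mul hfm
  have hae_min : ∀ᵐ s ∂volume.restrict (Ioi (0:ℝ)), ‖-(min t s) * f s‖ ≤ t * Φ s := by
    filter_upwards [hfΦ, ae_restrict_mem measurableSet_Ioi] with s hs hs0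
    rw [norm_mul, norm_neg, Real.norm_eq_abs, Real.norm_eq_abs,
      abs_of_nonneg (le_min ht0.le (le_of_lt hs0))]
    exact mul_le_mul (min_le_left _ _) hs (abs_nonneg _) ht0.le
  have hgi : IntegrableOn (fun s => -(min t s) * f s) (Ioi (0:ℝ)) :=
    Integrable.mono' (hΦi.const_mul t) hminmeas.aestronglyMeasurable hae_min
  have hIndInt : Integrable (fun s => R * Φ s + t * (Ioi R).indicator Φ s)
      (volume.restrict (Ioi (0:ℝ))) :=
    (hΦi.const_mul R).add ((hΦi.indicator measurableSet_Ioi).const_mul t)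
  have hWbound : |greenInt f t| ≤ R * CΦ + δ * t := by
    unfold greenInt
    have h1 : |∫ s in Ioi (0:ℝ), -(min t s) * f s| ≤ ∫ s in Ioi (0:ℝ), ‖-(min t s) * f s‖ := by
      simpa [Real.norm_eq_abs] using
        norm_integral_le_integral_norm (μ := volume.restrict (Ioi (0:ℝ)))
          (f := fun s => -(min t s) * f s)
    have h2 : ∫ s in Ioi (0:ℝ), ‖-(min t s) * f s‖
        ≤ ∫ s in Ioi (0:ℝ), (R * Φ s + t * (Ioi R).indicator Φ s) := by
      refine integral_mono_ae hgi.norm hIndInt ?_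
      filter_upwards [hfΦ, ae_restrict_mem measurableSet_Ioi] with s hs hs0
      rw [norm_mul, norm_neg, Real.norm_eq_abs, Real.norm_eq_abs,
        abs_of_nonneg (le_min ht0.le (le_of_lt hs0))]
      have hfsΦ : |f s| ≤ Φ s := hs
      by_cases hsR : R < s
      · have : (Ioi R).indicator Φ s = Φ s := indicator_of_mem hsR Φ
        rw [this]
        have h2 : min t s * |f s| ≤ t * Φ s :=
          mul_le_mul (min_le_left _ _) hfsΦ (abs_nonneg _) ht0.le
        have h3 : 0 ≤ R * Φ s := mul_nonneg hR0.le (hΦ0 s)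
        linarith
      · have : (Ioi R).indicator Φ s = 0 := indicator_of_notMem hsR Φ
        rw [this, mul_zero, add_zero]
        have h1 : min t s ≤ R := le_trans (min_le_right _ _) (not_lt.mp hsR)
        have : min t s * |f s| ≤ R * Φ s :=
          mul_le_mul h1 hfsΦ (abs_nonneg _) hR0.le
        linarith
    have h3 : ∫ s in Ioi (0:ℝ), (R * Φ s + t * (Ioi R).indicator Φ s)
        = R * CΦ + t * ∫ s in Ioi R, Φ s := by
      rw [integral_add (hΦi.const_mul R) ((hΦi.indicator measurableSet_Ioi).const_mul t),
        integral_const_mul, integral_const_mul, setIntegral_indicator measurableSet_Ioi,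
        inter_eq_self_of_subset_right (Ioi_subset_Ioi hR0.le)]
    have h4 : t * ∫ s in Ioi R, Φ s ≤ t * δ :=
      mul_le_mul_of_nonneg_left (hΦtail R le_rfl).le ht0.le
    calc |∫ s in Ioi (0:ℝ), -(min t s) * f s| ≤ _ := h1
      _ ≤ _ := h2
      _ = R * CΦ + t * ∫ s in Ioi R, Φ s := h3
      _ ≤ R * CΦ + δ * t := by linarith
  -- impS' bound
  have hsb' : Summable fun k => if tseq k < t then b k else 0 := by
    refine Summable.of_abs (Summable.of_nonneg_of_le (fun k => abs_nonneg _) (fun k => ?_) hψs)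
    by_cases h : tseq k < t <;> simp [h, hb k, hψ0 k]
  set e : ℕ → ℝ := fun k => (if tseq k < t then b k else 0) - b k with he_def
  have he : ∀ k, |e k| ≤ if tseq k < t then 0 else ψ k := by
    intro k
    by_cases h : tseq k < t <;> simp [he_def, h, hb k]
  have hse_bound : Summable fun k => if tseq k < t then (0:ℝ) else ψ k := by
    refine Summable.of_nonneg_of_le (fun k => ?_) (fun k => ?_) hψs
    · by_cases h : tseq k < t <;> simp [h, hψ0 k]
    · by_cases h : tseq k < t <;> simp [h, hψ0 k]
  have hse_abs : Summable fun k => |e k| :=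
    Summable.of_nonneg_of_le (fun k => abs_nonneg _) he hse_bound
  have hS'bound : |impS' tseq b t| ≤ δ := by
    unfold impS'
    rw [← Summable.tsum_sub hsb' hsb]
    have h1 : |∑' k, e k| ≤ ∑' k, |e k| := by
      simpa [Real.norm_eq_abs] using
        norm_tsum_le_tsum_norm (f := e) (by simpa using hse_abs)
    have h2 : ∑' k, |e k| ≤ ∑' k, (if tseq k < t then (0:ℝ) else ψ k) :=
      Summable.tsum_le_tsum he hse_abs hse_bound
    have hsplit : ∑' k, (if tseq k < t then (0:ℝ) else ψ k)
        = (∑ k ∈ Finset.range N, if tseq k < t then (0:ℝ) else ψ k)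
          + ∑' i, (if tseq (i + N) < t then (0:ℝ) else ψ (i + N)) :=
      (Summable.sum_add_tsum_nat_add N hse_bound).symm
    have hz : (∑ k ∈ Finset.range N, if tseq k < t then (0:ℝ) else ψ k) = 0 := by
      refine Finset.sum_eq_zero fun k hk => ?_
      have : tseq k < t := lt_of_lt_of_le (hmono (Finset.mem_range.mp hk)) htN
      simp [this]
    have htail : ∑' i, (if tseq (i + N) < t then (0:ℝ) else ψ (i + N)) ≤ ∑' i, ψ (i + N) := by
      refine Summable.tsum_le_tsum (fun i => ?_) ((summable_nat_add_iff N).2 hse_bound)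
        ((summable_nat_add_iff N).2 hψs)
      by_cases h : tseq (i + N) < t <;> simp [h, hψ0 (i + N)]
    have : ∑' k, e k = ∑' k, ((if tseq k < t then b k else 0) - b k) := rfl
    rw [this] at h1
    linarith
  -- integral of f over Ioi t
  have hfi0 : IntegrableOn f (Ioi (0:ℝ)) := by
    refine Integrable.mono' hΦi hfm.aestronglyMeasurable ?_
    filter_upwards [hfΦ] with s hs
    simpa [Real.norm_eq_abs] using hs
  have hfit : IntegrableOn f (Ioi t) := hfi0.mono_set (Ioi_subset_Ioi ht0.le)
  have hfΦt : ∀ᵐ s ∂volume.restrict (Ioi t), |f s| ≤ Φ s :=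
    ae_restrict_of_ae_restrict_of_subset (Ioi_subset_Ioi ht0.le) hfΦ
  have hIf : |∫ s in Ioi t, f s| < δ := by
    have h1 : |∫ s in Ioi t, f s| ≤ ∫ s in Ioi t, |f s| := by
      simpa [Real.norm_eq_abs] using
        norm_integral_le_integral_norm (μ := volume.restrict (Ioi t)) (f := f)
    have h2 : ∫ s in Ioi t, |f s| ≤ ∫ s in Ioi t, Φ s := by
      refine integral_mono_ae hfit.abs (hΦi.mono_set (Ioi_subset_Ioi ht0.le)) hfΦt
    have h3 := hΦtail t hRt
    linarith
  constructor
  · -- first estimate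
    have hne : (1:ℝ) + t ≠ 0 := ne_of_gt h1t
    have hrw : (A + B * t + impS tseq a b t + greenInt f t) / (1 + t) - B
        = (A - B + impS tseq a b t + greenInt f t) / (1 + t) := by
      field_simp
      ring
    rw [hrw, abs_div, abs_of_pos h1t]
    rw [div_lt_iff₀ h1t]
    have hnum : |A - B + impS tseq a b t + greenInt f t|
        ≤ |A - B| + |impS tseq a b t| + |greenInt f t| := by
      calc |A - B + impS tseq a b t + greenInt f t|
          ≤ |A - B + impS tseq a b t| + |greenInt f t| := abs_add_le _ _
        _ ≤ |A - B| + |impS tseq a b t| + |greenInt f t| := by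
            have := abs_add_le (A - B) (impS tseq a b t); linarith
    have : |A - B + impS tseq a b t + greenInt f t| ≤ M + 2 * (δ * t) := by
      simp only [hM]
      linarith
    have hfin : M + 2 * (δ * t) < ε * (1 + t) := by
      have h2δ : 2 * (δ * t) ≤ 2 * (δ * (1 + t)) := by nlinarith
      have : M + 2 * (δ * t) ≤ 3 * (δ * (1 + t)) := by linarith
      have hδε : 3 * (δ * (1 + t)) < ε * (1 + t) := by
        rw [hδdef]; nlinarith
      linarith
    linarith
  · -- second estimate
    have hrw : (B + impS' tseq b t - ∫ s in Ioi t, f s) - B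
        = impS' tseq b t - ∫ s in Ioi t, f s := by ring
    rw [hrw]
    calc |impS' tseq b t - ∫ s in Ioi t, f s|
        ≤ |impS' tseq b t| + |∫ s in Ioi t, f s| := abs_sub _ _
      _ < δ + δ := by
          have := hS'bound
          linarith
      _ < ε := by rw [hδdef]; linarith
end

section
/- Let f, h : [0,∞)×ℝ⁴ → ℝ be L¹-Carathéodory functions, let (I_{0k})_k, (I_{1k})_k, (J_{0j})_j, (J_{1j})_j be Carathéodory sequences of functions [0,∞)×ℝ² → ℝ, let (t_k), (τ_j) be strictly increasing sequences of positive reals tending to +∞, and let A₁, A₂, B₁, B₂ ∈ ℝ. Suppose u ∈ X₁ (with impulse points (t_k)) and v ∈ X₂ (with impulse points (τ_j)) satisfy sup_t |u(t)|/(1+t) < ρ, sup_t |u'(t)| < ρ, sup_t |v(t)|/(1+t) < ρ, sup_t |v'(t)| < ρ for some ρ > 0, and that for every t ∈ [0,∞): u(t) = A₁ + B₁ t + Σ_{k : t_k < t} [I_{0k}(t_k,u(t_k),u'(t_k)) + I_{1k}(t_k,u(t_k),u'(t_k))(t - t_k)] - t Σ_{k=1}^{∞} I_{1k}(t_k,u(t_k),u'(t_k))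 + ∫₀^{+∞} G(t,s) f(s,u(s),v(s),u'(s),v'(s)) ds, and v(t) = A₂ + B₂ t + Σ_{j : τ_j < t} [J_{0j}(τ_j,v(τ_j),v'(τ_j)) + J_{1j}(τ_j,v(τ_j),v'(τ_j))(t - τ_j)] - t Σ_{j=1}^{∞} J_{1j}(τ_j,v(τ_j),v'(τ_j)) + ∫₀^{+∞} G(t,s) h(s,u(s),v(s),u'(s),v'(s)) ds. Then (u,v) is a solution of the impulsive boundary value problem: u''(t) = f(t,u(t),v(t),u'(t),v'(t)) for a.e. t with t ∉ {t_k}, v''(t) = h(t,u(t),v(t),u'(t),v'(t)) for a.e. t with t ∉ {τ_j}, u(0) = A₁, v(0) = A₂, lim_{t→+∞} u'(t) = B₁, lim_{t→+∞} v'(t) = B₂, and for all k, j ∈ ℕ: u(t_k⁺) - u(t_k⁻) = I_{0k}(t_k,u(t_k),u'(t_k)), u'(t_k⁺) - u'(t_k⁻) = I_{1k}(t_k,u(t_k),u'(t_k)), v(τ_j⁺) - v(τ_j⁻) = J_{0j}(τ_j,v(τ_j),v'(τ_j)), v'(τ_j⁺) - v'(τ_j⁻) = J_{1j}(τ_j,v(τ_j),v'(τ_j)).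 -/
open MeasureTheory Set Filter Topology

/-- `g : [0,∞) × ℝ⁴ → ℝ` is an `L¹`-Carathéodory function:
(i) `t ↦ g(t,x,y,z,w)` is measurable for each `(x,y,z,w)`;
(ii) `(x,y,z,w) ↦ g(t,x,y,z,w)` is continuous for a.e. `t ∈ [0,∞)`;
(iii) for each `ρ > 0` there is a nonnegative `φ_ρ ∈ L¹([0,∞))` dominating `g`
on the region `|x| ≤ ρ(1+t)`, `|y| ≤ ρ(1+t)`, `|z| ≤ ρ`, `|w| ≤ ρ`. -/
def L1Caratheodory (g : ℝ → ℝ → ℝ → ℝ → ℝ → ℝ) : Prop :=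
  (∀ x y z w : ℝ, Measurable fun t => g t x y z w) ∧
  (∀ᵐ t ∂(volume.restrict (Ici (0:ℝ))),
    Continuous fun p : ℝ × ℝ × ℝ × ℝ => g t p.1 p.2.1 p.2.2.1 p.2.2.2) ∧
  (∀ ρ : ℝ, 0 < ρ → ∃ φ : ℝ → ℝ, (∀ t, 0 ≤ φ t) ∧ IntegrableOn φ (Ici 0) ∧
    ∀ᵐ t ∂(volume.restrict (Ici (0:ℝ))), ∀ x y z w : ℝ,
      |x| ≤ ρ * (1 + t) → |y| ≤ ρ * (1 + t) → |z| ≤ ρ → |w| ≤ ρ →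
        |g t x y z w| ≤ φ t)

/-- A Carathéodory sequence `(c_n)` of functions `[0,∞) × ℝ² → ℝ`:
each `(a,b) ↦ c_n(t,a,b)` is continuous, and for each `ρ > 0` there are nonnegative
summable constants `χ_{n,ρ}` with `|c_n(t,a,b)| ≤ χ_{n,ρ}` whenever `|a| < ρ(1+t)`
and `|b| < ρ`. -/
def CaratheodorySeq (c : ℕ → ℝ → ℝ → ℝ → ℝ) : Prop :=
  (∀ n t, Continuous fun p : ℝ × ℝ => c n t p.1 p.2) ∧
  ∀ ρ : ℝ, 0 < ρ → ∃ χ : ℕ → ℝ, (∀ n, 0 ≤ χ n) ∧ Summable χ ∧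
    ∀ (n : ℕ) (t a b : ℝ), |a| < ρ * (1 + t) → |b| < ρ → |c n t a b| ≤ χ n

/-- Piecewise continuity with respect to the impulse points `(t_k)`:
continuous on `[0,∞)` off the impulse points, left-continuous at each `t_k`,
with finite right limits at each `t_k`. -/
def PCPiece (tseq : ℕ → ℝ) (u : ℝ → ℝ) : Prop :=
  (∀ t ∈ Ici (0:ℝ), t ∉ range tseq → ContinuousWithinAt u (Ici 0) t) ∧
  (∀ k, Tendsto u (𝓝[<] (tseq k)) (𝓝 (u (tseq k)))) ∧
  (∀ k, ∃ L : ℝ, Tendsto u (𝓝[>] (tseq k)) (𝓝 L))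

/-- `u ∈ X₁` (resp. `X₂`) with derivative `u'`: `u` is `PC¹` with respect to the impulse
points `(t_k)` (piecewise continuous, differentiable off the impulse points with
piecewise continuous derivative `u'`), and both `u(t)/(1+t)` and `u'(t)` have finite
limits at `+∞`. -/
def MemX (tseq : ℕ → ℝ) (u u' : ℝ → ℝ) : Prop :=
  PCPiece tseq u ∧
  (∀ t ∈ Ici (0:ℝ), t ∉ range tseq → HasDerivWithinAt u (u' t) (Ici 0) t) ∧
  PCPiece tseq u' ∧
  (∃ L : ℝ, Tendsto (fun t => u t / (1 + t)) atTop (𝓝 L)) ∧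
  (∃ L : ℝ, Tendsto u' atTop (𝓝 L))

lemma ftc_leb (Fi : ℝ → ℝ) (hFi : Integrable Fi) :
    ∀ᵐ x : ℝ, HasDerivAt (fun y => ∫ u in (0:ℝ)..y, Fi u) (Fi x) x := by
  have hloc : LocallyIntegrable Fi volume := hFi.locallyIntegrable
  filter_upwards [IsUnifLocDoublingMeasure.ae_tendsto_average_norm_sub (μ := volume) hloc 1]
    with x hx
  have hAvg : Tendsto (fun r : ℝ => ⨍ u in Metric.closedBall x r, ‖Fi u - Fi x‖)
      (𝓝[>] 0) (𝓝 0) := by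
    refine hx (fun _ => x) id tendsto_id ?_
    filter_upwards [self_mem_nhdsWithin] with r (hr : 0 < r)
    simpa using hr.le
  rw [hasDerivAt_iff_tendsto_slope]
  rw [tendsto_iff_norm_sub_tendsto_zero]
  have hnorm : Tendsto (fun y : ℝ => ‖y - x‖) (𝓝[≠] x) (𝓝[>] 0) := by
    refine tendsto_nhdsWithin_iff.2 ⟨?_, ?_⟩
    · have : Tendsto (fun y : ℝ => ‖y - x‖) (𝓝 x) (𝓝 ‖(0:ℝ)‖) := by
        apply Continuous.tendsto'
        · continuity
        · simp
      simpa using this.mono_left nhdsWithin_le_nhds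
    · filter_upwards [self_mem_nhdsWithin] with y (hy : y ≠ x)
      simpa [sub_eq_zero] using hy
  refine squeeze_zero' (Eventually.of_forall fun y => norm_nonneg _) ?_
      (by simpa using (hAvg.comp hnorm).const_mul 2)
  filter_upwards [self_mem_nhdsWithin] with y (hy : y ≠ x)
  have hyx : (0:ℝ) < ‖y - x‖ := by simpa [sub_eq_zero] using hy
  have hint : IntervalIntegrable Fi volume x y := hFi.intervalIntegrable
  have h1 : slope (fun y => ∫ u in (0:ℝ)..y, Fi u) x y - Fi x
      = (y - x)⁻¹ * ∫ u in x..y, (Fi u - Fi x) := by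
    rw [slope_def_field]; rw [div_eq_inv_mul]
    rw [intervalIntegral.integral_sub hint (intervalIntegrable_const)]
    rw [intervalIntegral.integral_const]
    have h2 : (∫ u in (0:ℝ)..y, Fi u) - (∫ u in (0:ℝ)..x, Fi u) = ∫ u in x..y, Fi u :=
      intervalIntegral.integral_interval_sub_left hFi.intervalIntegrable hFi.intervalIntegrable
    rw [h2, mul_sub]
    congr 1
    rw [smul_eq_mul, ← mul_assoc, inv_mul_cancel₀ (sub_ne_zero.2 hy), one_mul]
  rw [h1]
  have h3 : ‖∫ u in x..y, (Fi u - Fi x)‖ ≤ ∫ u in Metric.closedBall x ‖y - x‖, ‖Fi u - Fi x‖ := by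
    refine (intervalIntegral.norm_integral_le_integral_norm_uIoc).trans ?_
    refine setIntegral_mono_set ((hFi.integrableOn.sub (integrableOn_const measure_closedBall_lt_top.ne)).norm) ?_ ?_
    · filter_upwards with u using norm_nonneg _
    · refine HasSubset.Subset.eventuallyLE fun u hu => ?_
      rcases le_total x y with hxy | hxy
      · rw [uIoc_of_le hxy] at hu
        simp only [Metric.mem_closedBall, Real.dist_eq, Real.norm_eq_abs]
        rw [abs_of_nonneg (by linarith [hu.1, hu.2] : (0:ℝ) ≤ y - x)]
        rw [abs_le]; constructor <;> [linarith [hu.1]; linarith [hu.2]]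
      · rw [uIoc_of_ge hxy] at hu
        simp only [Metric.mem_closedBall, Real.dist_eq, Real.norm_eq_abs]
        rw [abs_of_nonpos (by linarith : y - x ≤ 0)]
        rw [abs_le]; constructor <;> [linarith [hu.1]; linarith [hu.2]]
  have h4 : ∫ u in Metric.closedBall x ‖y - x‖, ‖Fi u - Fi x‖
      = 2 * ‖y - x‖ * ⨍ u in Metric.closedBall x ‖y - x‖, ‖Fi u - Fi x‖ := by
    rw [setAverage_eq]
    rw [Real.volume_real_closedBall (by positivity)]
    rw [smul_eq_mul, ← mul_assoc, mul_inv_cancel₀ (by positivity), one_mul]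
  calc ‖(y - x)⁻¹ * ∫ u in x..y, (Fi u - Fi x)‖
      = ‖y - x‖⁻¹ * ‖∫ u in x..y, (Fi u - Fi x)‖ := by rw [norm_mul, norm_inv]
    _ ≤ ‖y - x‖⁻¹ * (2 * ‖y - x‖ * ⨍ u in Metric.closedBall x ‖y - x‖, ‖Fi u - Fi x‖) := by
        rw [← h4]; exact mul_le_mul_of_nonneg_left h3 (by positivity)
    _ = 2 * ⨍ u in Metric.closedBall x ‖y - x‖, ‖Fi u - Fi x‖ := by
        have habs : |y - x| ≠ 0 := by rw [← Real.norm_eq_abs]; exact hyx.ne'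
        field_simp


-- gap lemma
lemma gap_lemma (tseq : ℕ → ℝ) (htt : Tendsto tseq atTop atTop) (t : ℝ) :
    ∃ ε > 0, ∀ k, tseq k ≠ t → ε ≤ |tseq k - t| := by
  have hfin : {k : ℕ | tseq k < t + 1}.Finite := by
    obtain ⟨N, hN⟩ := (htt.eventually_ge_atTop (t + 1)).exists_forall_of_atTop
    exact (Set.finite_Iio N).subset fun k hk => by
      by_contra h
      exact absurd (hN k (not_lt.1 h)) (not_le.2 hk)
  set s := hfin.toFinset.filter (fun k => tseq k ≠ t) with hs
  by_cases h : s.Nonempty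
  · refine ⟨min 1 (s.inf' h fun k => |tseq k - t|), lt_min one_pos ?_, fun k hk => ?_⟩
    · rw [Finset.lt_inf'_iff]
      intro k hks
      have : tseq k ≠ t := (Finset.mem_filter.1 hks).2
      exact abs_pos.2 (sub_ne_zero.2 this)
    · by_cases hk1 : tseq k < t + 1
      · have hks : k ∈ s := Finset.mem_filter.2 ⟨hfin.mem_toFinset.2 hk1, hk⟩
        exact (min_le_right _ _).trans (Finset.inf'_le _ hks)
      · push_neg at hk1
        refine (min_le_left _ _).trans ?_
        rw [abs_of_nonneg (by linarith)]
        linarith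
  · refine ⟨1, one_pos, fun k hk => ?_⟩
    by_cases hk1 : tseq k < t + 1
    · exact absurd ⟨k, Finset.mem_filter.2 ⟨hfin.mem_toFinset.2 hk1, hk⟩⟩ h
    · push_neg at hk1
      rw [abs_of_nonneg (by linarith)]
      linarith

lemma loc_const (tseq : ℕ → ℝ) (htt : Tendsto tseq atTop atTop) (t : ℝ) (ht : t ∉ range tseq) :
    ∃ ε > 0, ∀ y, |y - t| < ε → (∀ k, (tseq k < y ↔ tseq k < t)) ∧ y ∉ range tseq := by
  obtain ⟨ε, hε, hgap⟩ := gap_lemma tseq htt t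
  have hne : ∀ k, tseq k ≠ t := fun k h => ht ⟨k, h⟩
  have key : ∀ k, tseq k ≤ t - ε ∨ t + ε ≤ tseq k := by
    intro k
    rcases le_abs.1 (hgap k (hne k)) with h | h
    · right; linarith
    · left; linarith
  refine ⟨ε, hε, fun y hy => ?_⟩
  rw [abs_lt] at hy
  constructor
  · intro k
    rcases key k with h | h
    · constructor <;> intro <;> linarith
    · constructor <;> intro <;> linarith
  · rintro ⟨k, hk⟩
    rcases key k with h | h <;> rw [hk] at h <;> linarith

lemma loc_right (tseq : ℕ → ℝ) (htm : StrictMono tseq) (htt : Tendsto tseq atTop atTop) (k : ℕ) :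
    ∃ ε > 0, ∀ y, tseq k < y → y < tseq k + ε →
      (∀ j, (tseq j < y ↔ (tseq j < tseq k ∨ j = k))) ∧ y ∉ range tseq := by
  obtain ⟨ε, hε, hgap⟩ := gap_lemma tseq htt (tseq k)
  have key : ∀ j, j ≠ k → tseq j ≤ tseq k - ε ∨ tseq k + ε ≤ tseq j := by
    intro j hj
    rcases le_abs.1 (hgap j (fun h => hj (htm.injective h))) with h | h
    · right; linarith
    · left; linarith
  refine ⟨ε, hε, fun y hy1 hy2 => ⟨fun j => ?_, ?_⟩⟩
  · by_cases hj : j = k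
    · subst hj; constructor <;> intro <;> [right; skip] <;> first | rfl | assumption | linarith
    · rcases key j hj with h | h
      · constructor <;> intro <;> [left; skip] <;> linarith
      · constructor
        · intro; linarith
        · rintro (h1 | h1)
          · linarith
          · exact absurd h1 hj
  · rintro ⟨j, hj⟩
    by_cases hjk : j = k
    · subst hjk; linarith
    · rcases key j hjk with h | h <;> rw [hj] at h <;> linarith

lemma loc_left (tseq : ℕ → ℝ) (htm : StrictMono tseq) (htt : Tendsto tseq atTop atTop)
    (htp : ∀ k, 0 < tseq k) (k : ℕ) :
    ∃ ε > 0, 0 ≤ tseq k - ε ∧ ∀ y, tseq k - ε < y → y < tseq k →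
      (∀ j, (tseq j < y ↔ tseq j < tseq k)) ∧ y ∉ range tseq := by
  obtain ⟨ε, hε, hgap⟩ := gap_lemma tseq htt (tseq k)
  have key : ∀ j, j ≠ k → tseq j ≤ tseq k - ε ∨ tseq k + ε ≤ tseq j := by
    intro j hj
    rcases le_abs.1 (hgap j (fun h => hj (htm.injective h))) with h | h
    · right; linarith
    · left; linarith
  refine ⟨min ε (tseq k), lt_min hε (htp k), by
      have := min_le_right ε (tseq k); linarith, fun y hy1 hy2 => ⟨fun j => ?_, ?_⟩⟩
  have hεm : tseq k - ε ≤ tseq k - min ε (tseq k) := by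
    have := min_le_left ε (tseq k); linarith
  · by_cases hj : j = k
    · subst hj; constructor <;> intro <;> linarith
    · rcases key j hj with h | h
      · constructor <;> intro <;> linarith
      · constructor <;> intro <;> linarith
  · rintro ⟨j, hj⟩
    by_cases hjk : j = k
    · subst hjk; linarith
    · rcases key j hjk with h | h <;> rw [hj] at h <;>
        [(have := min_le_left ε (tseq k); linarith); linarith]

lemma min_lip (a b c : ℝ) : |min a c - min b c| ≤ |a - b| := by
  rcases le_total a c with h1 | h1 <;> rcases le_total b c with h2 | h2 <;>
    rw [abs_sub_le_iff] <;> constructor <;>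
    simp only [min_eq_left, min_eq_right, h1, h2] <;>
    linarith [le_abs_self (a - b), neg_abs_le (a - b), abs_nonneg (a - b)]

lemma integrable_min_mul (Fi : ℝ → ℝ) (hFi : Integrable Fi) (y : ℝ) :
    Integrable (fun s => -(min y s) * Fi s) (volume.restrict (Ioi 0)) := by
  have hm : AEStronglyMeasurable (fun s => -(min y s) * Fi s) (volume.restrict (Ioi 0)) :=
    (((continuous_const.min continuous_id).neg).aestronglyMeasurable).mul
      (hFi.aestronglyMeasurable.restrict)
  refine Integrable.mono ((hFi.norm.const_mul |y|).restrict (s := Ioi 0)) hm ?_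
  filter_upwards [ae_restrict_mem measurableSet_Ioi] with s (hs : (0:ℝ) < s)
  simp only [Real.norm_eq_abs, abs_mul, abs_neg, abs_abs]
  have hmin : |min y s| ≤ |y| := by
    rcases le_total y s with h | h
    · rw [min_eq_left h]
    · rw [min_eq_right h, abs_of_pos hs, abs_of_pos (lt_of_lt_of_le hs h)]
      exact h
  exact mul_le_mul_of_nonneg_right hmin (abs_nonneg _)

lemma phi_deriv (Fi : ℝ → ℝ) (hFi : Integrable Fi) (t : ℝ) (ht : 0 ≤ t) :
    HasDerivAt (fun y => ∫ s in Ioi (0:ℝ), (-(min y s)) * Fi s) (-(∫ s in Ioi t, Fi s)) t := by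
  rw [hasDerivAt_iff_tendsto_slope]
  have hlim : Tendsto (fun y => ∫ s in Ioi (0:ℝ),
      (y - t)⁻¹ * ((-(min y s)) * Fi s - (-(min t s)) * Fi s)) (𝓝[≠] t)
      (𝓝 (∫ s in Ioi (0:ℝ), -(Set.indicator (Ioi t) Fi s))) := by
    apply tendsto_integral_filter_of_dominated_convergence (fun s => |Fi s|)
    · filter_upwards [self_mem_nhdsWithin] with y _
      exact (((integrable_min_mul Fi hFi y).sub (integrable_min_mul Fi hFi t)).const_mul
        _).aestronglyMeasurable
    · filter_upwards [self_mem_nhdsWithin] with y (hy : y ≠ t)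
      filter_upwards with s
      rw [Real.norm_eq_abs, abs_mul, abs_inv]
      have h1 : (-(min y s)) * Fi s - (-(min t s)) * Fi s = (min t s - min y s) * Fi s := by ring
      rw [h1, abs_mul]
      have h2 : |min t s - min y s| ≤ |t - y| := min_lip t y s
      have h3 : (0:ℝ) < |y - t| := abs_pos.2 (sub_ne_zero.2 hy)
      calc |y - t|⁻¹ * (|min t s - min y s| * |Fi s|)
          ≤ |y - t|⁻¹ * (|y - t| * |Fi s|) := by
            rw [abs_sub_comm t y] at h2
            gcongr
        _ = |Fi s| := by field_simp
    · exact hFi.norm.restrict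
    · have hne : ∀ᵐ s : ℝ, s ≠ t := by
        rw [ae_iff]
        have : {a : ℝ | ¬ a ≠ t} = {t} := by ext; simp
        rw [this]
        exact measure_singleton t
      filter_upwards [ae_restrict_mem measurableSet_Ioi, ae_restrict_of_ae hne] with s hs hst
      have hs0 : (0:ℝ) < s := hs
      rcases hst.lt_or_gt with hlt | hlt
      · -- s < t : limit 0
        have hind : Set.indicator (Ioi t) Fi s = 0 := by
          apply Set.indicator_of_notMem
          simpa using hlt.le
        rw [hind, neg_zero]
        apply Tendsto.congr' _ tendsto_const_nhds
        have hball : {t}ᶜ ∩ Metric.ball t (t - s) ∈ 𝓝[≠] t :=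
          inter_mem_nhdsWithin _ (Metric.ball_mem_nhds t (by linarith : (0:ℝ) < t - s))
        filter_upwards [hball] with y hy
        have h1 : |y - t| < t - s := by simpa [Real.dist_eq] using hy.2
        have h2 : s < y := by rcases abs_lt.1 h1 with ⟨h, _⟩; linarith
        rw [min_eq_right h2.le, min_eq_right hlt.le]
        ring
      · -- t < s : limit -(Fi s)
        have hind : Set.indicator (Ioi t) Fi s = Fi s := Set.indicator_of_mem hlt Fi
        rw [hind]
        apply Tendsto.congr' _ tendsto_const_nhds
        have hball : {t}ᶜ ∩ Metric.ball t (s - t) ∈ 𝓝[≠] t :=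
          inter_mem_nhdsWithin _ (Metric.ball_mem_nhds t (by linarith : (0:ℝ) < s - t))
        filter_upwards [hball] with y hy
        have h1 : |y - t| < s - t := by simpa [Real.dist_eq] using hy.2
        have hyt : y ≠ t := hy.1
        have h2 : y < s := by rcases abs_lt.1 h1 with ⟨_, h⟩; linarith
        rw [min_eq_left h2.le, min_eq_left hlt.le]
        have h3 : y - t ≠ 0 := sub_ne_zero.2 hyt
        field_simp
        ring
  have heq : (∫ s in Ioi (0:ℝ), -(Set.indicator (Ioi t) Fi s))
      = -(∫ s in Ioi t, Fi s) := by
    rw [integral_neg, setIntegral_indicator measurableSet_Ioi, Ioi_inter_Ioi,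
      max_eq_right ht]
  rw [heq] at hlim
  apply Tendsto.congr' _ hlim
  filter_upwards [self_mem_nhdsWithin] with y (hy : y ≠ t)
  rw [slope_def_field, div_eq_inv_mul, ← integral_sub (integrable_min_mul Fi hFi y)
    (integrable_min_mul Fi hFi t), ← smul_eq_mul, ← integral_smul]
  simp [smul_eq_mul]

lemma kfin (tseq : ℕ → ℝ) (htt : Tendsto tseq atTop atTop) (t : ℝ) :
    {k : ℕ | tseq k < t}.Finite := by
  obtain ⟨N, hN⟩ := (htt.eventually_ge_atTop t).exists_forall_of_atTop
  exact (Set.finite_Iio N).subset fun k hk => by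
    by_contra h
    exact absurd (hN k (not_lt.1 h)) (not_le.2 hk)

lemma tsum_ite_eq_sum (tseq : ℕ → ℝ) (g : ℕ → ℝ) (t : ℝ) (s : Finset ℕ)
    (hiff : ∀ k, tseq k < t ↔ k ∈ s) :
    (∑' k, if tseq k < t then g k else 0) = ∑ k ∈ s, g k := by
  rw [tsum_eq_sum (s := s) (fun k hk => if_neg (fun h => hk ((hiff k).1 h)))]
  exact Finset.sum_congr rfl fun k hk => if_pos ((hiff k).2 hk)

lemma master (tseq : ℕ → ℝ) (htm : StrictMono tseq) (htp : ∀ k, 0 < tseq k)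
    (htt : Tendsto tseq atTop atTop) (A B : ℝ) (u u' : ℝ → ℝ) (hu : MemX tseq u u')
    (F : ℝ → ℝ) (hF : IntegrableOn F (Ioi 0)) (a b : ℕ → ℝ) (hb : Summable b)
    (hrep : ∀ t ∈ Ici (0:ℝ), u t = A + B * t
      + ((∑' k, if tseq k < t then a k + b k * (t - tseq k) else 0) - t * ∑' k, b k)
      + ∫ s in Ioi (0:ℝ), (-(min t s)) * F s) :
    (∀ᵐ t ∂(volume.restrict (Ici (0:ℝ))), t ∉ range tseq → HasDerivAt u' (F t) t) ∧
    u 0 = A ∧ Tendsto u' atTop (𝓝 B) ∧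
    (∀ k, Tendsto u (𝓝[>] (tseq k)) (𝓝 (u (tseq k) + a k))) ∧
    (∀ k, Tendsto u' (𝓝[>] (tseq k)) (𝓝 (u' (tseq k) + b k))) := by
  classical
  set Fi : ℝ → ℝ := Set.indicator (Ioi 0) F with hFidef
  have hFi : Integrable Fi := by
    rw [hFidef, integrable_indicator_iff measurableSet_Ioi]; exact hF
  have hFiF : ∀ s ∈ Ioi (0:ℝ), Fi s = F s := fun s hs => Set.indicator_of_mem hs F
  set Φ : ℝ → ℝ := fun t => ∫ s in Ioi (0:ℝ), (-(min t s)) * Fi s with hΦdef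
  have hΦF : ∀ t, (∫ s in Ioi (0:ℝ), (-(min t s)) * F s) = Φ t := fun t =>
    setIntegral_congr_fun measurableSet_Ioi (fun s hs => by rw [← hFiF s hs])
  set H : ℝ → ℝ := fun x => ∫ s in Ioi x, Fi s with hHdef
  have hΦd : ∀ t, 0 ≤ t → HasDerivAt Φ (-(H t)) t := fun t ht => phi_deriv Fi hFi t ht
  have hHeq : ∀ x, H x = (∫ s in Ioi (0:ℝ), Fi s) - ∫ s in (0:ℝ)..x, Fi s := by
    intro x
    rcases le_or_gt 0 x with hx | hx
    · rw [intervalIntegral.integral_of_le hx, eq_sub_iff_add_eq, add_comm,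
        ← setIntegral_union (Ioc_disjoint_Ioi le_rfl) measurableSet_Ioi
          (hFi.integrableOn) (hFi.integrableOn), Ioc_union_Ioi_eq_Ioi hx]
    · have h0 : ∀ s ∈ Ioc x 0, Fi s = 0 := fun s hs =>
        Set.indicator_of_notMem (by simpa using hs.2) F
      have h1 : (∫ s in Ioc x 0, Fi s) = 0 := by
        rw [setIntegral_congr_fun measurableSet_Ioc h0, integral_zero]
      rw [intervalIntegral.integral_of_ge hx.le, h1, neg_zero, sub_zero]
      show (∫ s in Ioi x, Fi s) = ∫ s in Ioi (0:ℝ), Fi s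
      rw [← Ioc_union_Ioi_eq_Ioi hx.le,
        setIntegral_union (Ioc_disjoint_Ioi le_rfl) measurableSet_Ioi
          (hFi.integrableOn) (hFi.integrableOn), h1, zero_add]
  have hHcont : Continuous H := by
    rw [funext hHeq]
    exact continuous_const.sub
      (intervalIntegral.continuous_primitive (fun a b => hFi.intervalIntegrable) 0)
  have hKfin : ∀ t : ℝ, {k : ℕ | tseq k < t}.Finite := kfin tseq htt
  set Wsum : ℝ → ℝ := fun t => ∑' k, if tseq k < t then b k else 0 with hWdef
  have hWsum : ∀ t, Wsum t = ∑ k ∈ (hKfin t).toFinset, b k := fun t =>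
    tsum_ite_eq_sum tseq b t _ (fun k => ((hKfin t).mem_toFinset).symm)
  have hrepΦ : ∀ t ∈ Ici (0:ℝ), u t = A + B * t
      + ((∑' k, if tseq k < t then a k + b k * (t - tseq k) else 0) - t * ∑' k, b k)
      + Φ t := fun t ht => by rw [hrep t ht, hΦF]
  -- key identification of u'
  have hW : ∀ t ∈ Ici (0:ℝ), t ∉ range tseq →
      u' t = B + Wsum t - (∑' k, b k) - H t := by
    intro t ht hnt
    obtain ⟨ε, hε, hloc⟩ := loc_const tseq htt t hnt
    set sfin := (hKfin t).toFinset with hsfin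
    have hiff : ∀ k, tseq k < t ↔ k ∈ sfin := fun k => ((hKfin t).mem_toFinset).symm
    set q : ℝ → ℝ := fun y => A + B * y
      + ((∑ k ∈ sfin, (a k + b k * (y - tseq k))) - y * ∑' k, b k) + Φ y with hqdef
    have hqd : HasDerivAt q (B + ((∑ k ∈ sfin, b k) - (∑' k, b k)) + (-(H t))) t := by
      have hA : HasDerivAt (fun y : ℝ => A + B * y) B t := by
        simpa using ((hasDerivAt_id t).const_mul B).const_add A
      have h1 : HasDerivAt (fun y : ℝ => ∑ k ∈ sfin, (a k + b k * (y - tseq k)))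
          (∑ k ∈ sfin, b k) t := by
        apply HasDerivAt.fun_sum
        intro k _
        simpa using (((hasDerivAt_id t).sub_const (tseq k)).const_mul (b k)).const_add (a k)
      have hX : HasDerivAt
          (fun y => (∑ k ∈ sfin, (a k + b k * (y - tseq k))) - y * ∑' k, b k)
          ((∑ k ∈ sfin, b k) - (∑' k, b k)) t := by
        apply h1.sub
        simpa using (hasDerivAt_id t).mul_const (∑' k, b k)
      exact (hA.add hX).add (hΦd t ht)
    have hueq : ∀ y ∈ Ici (0:ℝ) ∩ Metric.ball t ε, u y = q y := by
      intro y ⟨hy0, hyb⟩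
      have hy : |y - t| < ε := by simpa [Real.dist_eq] using hyb
      have hiffy : ∀ k, tseq k < y ↔ k ∈ sfin := fun k =>
        ((hloc y hy).1 k).trans (hiff k)
      rw [hrepΦ y hy0, tsum_ite_eq_sum tseq _ y sfin hiffy]
    have hqu : HasDerivWithinAt u (B + ((∑ k ∈ sfin, b k) - (∑' k, b k)) + (-(H t)))
        (Ici 0) t := by
      have h1 : HasDerivWithinAt q _ (Ici 0 ∩ Metric.ball t ε) t := hqd.hasDerivWithinAt
      have h2 := h1.congr hueq (hueq t ⟨ht, Metric.mem_ball_self hε⟩)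
      exact h2.mono_of_mem_nhdsWithin
        (inter_mem_nhdsWithin _ (Metric.ball_mem_nhds t hε))
    have := (uniqueDiffOn_Ici 0 t ht).eq_deriv _ (hu.2.1 t ht hnt) hqu
    rw [this, hWsum t]
    ring
  refine ⟨?_, ?_, ?_, ?_, ?_⟩
  · -- a.e. second derivative
    have hae1 : ∀ᵐ t ∂(volume.restrict (Ici (0:ℝ))),
        HasDerivAt (fun y => ∫ s in (0:ℝ)..y, Fi s) (Fi t) t :=
      ae_restrict_of_ae (ftc_leb Fi hFi)
    have hae2 : ∀ᵐ t ∂(volume.restrict (Ici (0:ℝ))), t ≠ 0 := by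
      refine ae_restrict_of_ae ?_
      rw [ae_iff]
      have h : {x : ℝ | ¬ x ≠ 0} = {0} := by ext; simp
      rw [h]
      exact measure_singleton 0
    filter_upwards [hae1, hae2, ae_restrict_mem measurableSet_Ici] with t h1 h2 ht hnt
    have ht0 : 0 < t := lt_of_le_of_ne ht (Ne.symm h2)
    obtain ⟨ε, hε, hloc⟩ := loc_const tseq htt t hnt
    have hε'0 : 0 < min ε t := lt_min hε ht0
    have hgd : HasDerivAt (fun y => B + Wsum t - (∑' k, b k) - H y) (F t) t := by
      have hHd : HasDerivAt H (-(Fi t)) t := by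
        rw [funext hHeq]
        simpa using ((hasDerivAt_const t (∫ s in Ioi (0:ℝ), Fi s)).fun_sub h1)
      have hd := (hasDerivAt_const t (B + Wsum t - (∑' k, b k))).fun_sub hHd
      have hval : Fi t = F t := hFiF t ht0
      simpa [hval] using hd
    have heq : u' =ᶠ[𝓝 t] (fun y => B + Wsum t - (∑' k, b k) - H y) := by
      filter_upwards [Metric.ball_mem_nhds t hε'0] with y hy
      have hyb : |y - t| < min ε t := by simpa [Real.dist_eq] using hy
      have hy0 : y ∈ Ici (0:ℝ) := by
        rcases abs_lt.1 hyb with ⟨hl, _⟩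
        have h3 : ε ⊓ t ≤ t := min_le_right ε t
        have h4 : 0 < y := by linarith
        exact h4.le
      have hyε : |y - t| < ε := lt_of_lt_of_le hyb (min_le_left _ _)
      rw [hW y hy0 (hloc y hyε).2]
      have hww : Wsum y = Wsum t := tsum_congr fun k => by
        rw [if_congr ((hloc y hyε).1 k) rfl rfl]
      rw [hww]
    exact hgd.congr_of_eventuallyEq heq
  · -- u 0 = A
    rw [hrepΦ 0 self_mem_Ici]
    have h1 : (∑' k, if tseq k < (0:ℝ) then a k + b k * (0 - tseq k) else 0) = 0 :=
      (tsum_congr fun k => if_neg (not_lt.2 (htp k).le)).trans tsum_zero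
    have h2 : Φ 0 = 0 := by
      show (∫ s in Ioi (0:ℝ), -(min 0 s) * Fi s) = 0
      have h3 : ∀ s ∈ Ioi (0:ℝ), -(min (0:ℝ) s) * Fi s = (fun _ => (0:ℝ)) s :=
        fun s hs => by rw [min_eq_left (le_of_lt hs)]; ring
      rw [setIntegral_congr_fun measurableSet_Ioi h3, integral_zero]
    rw [h1, h2]
    ring
  · -- limit of u' at infinity
    have hprim : Tendsto (fun x => ∫ s in (0:ℝ)..x, Fi s) atTop
        (𝓝 (∫ s in Ioi (0:ℝ), Fi s)) :=
      intervalIntegral_tendsto_integral_Ioi 0 hFi.integrableOn tendsto_id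
    have hH0 : Tendsto H atTop (𝓝 0) := by
      rw [funext hHeq]
      have h := (tendsto_const_nhds (x := ∫ s in Ioi (0:ℝ), Fi s)).sub hprim
      simpa using h
    have hm : Tendsto (fun t : ℝ => (hKfin t).toFinset) atTop atTop := by
      rw [Filter.tendsto_atTop]
      intro s₀
      have h : ∀ᶠ t : ℝ in atTop, ∀ k ∈ s₀, tseq k < t := by
        rw [eventually_all_finset]
        exact fun k _ => eventually_gt_atTop (tseq k)
      filter_upwards [h] with t h4 k hk
      exact (hKfin t).mem_toFinset.2 (h4 k hk)
    have hhs : Tendsto (fun s : Finset ℕ => ∑ k ∈ s, b k) atTop (𝓝 (∑' k, b k)) :=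
      hb.hasSum
    have hWt : Tendsto Wsum atTop (𝓝 (∑' k, b k)) :=
      Tendsto.congr (fun t => (hWsum t).symm) (hhs.comp hm)
    obtain ⟨L, hL⟩ := hu.2.2.2.2
    set xs : ℕ → ℝ := fun k => (tseq k + tseq (k + 1)) / 2 with hxs
    have hxs1 : ∀ k, tseq k < xs k := fun k => by
      have := htm (Nat.lt_succ_self k); simp only [hxs]; linarith
    have hxs2 : ∀ k, xs k < tseq (k + 1) := fun k => by
      have := htm (Nat.lt_succ_self k); simp only [hxs]; linarith
    have hxs0 : ∀ k, xs k ∈ Ici (0:ℝ) := fun k => le_of_lt (lt_trans (htp k) (hxs1 k))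
    have hxsn : ∀ k, xs k ∉ range tseq := by
      rintro k ⟨j, hj⟩
      rcases le_or_gt j k with h | h
      · have h5 : tseq j ≤ tseq k := htm.monotone h
        rw [hj] at h5
        exact absurd (hxs1 k) (not_lt.2 h5)
      · have h5 : tseq (k + 1) ≤ tseq j := htm.monotone h
        rw [hj] at h5
        exact absurd (hxs2 k) (not_lt.2 h5)
    have hxstop : Tendsto xs atTop atTop :=
      tendsto_atTop_mono (fun k => (hxs1 k).le) htt
    have h1 : Tendsto (fun k => u' (xs k)) atTop (𝓝 L) := hL.comp hxstop
    have h2 : Tendsto (fun k => u' (xs k)) atTop (𝓝 B) := by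
      have h4 : Tendsto (fun k => B + Wsum (xs k) - (∑' j, b j) - H (xs k)) atTop
          (𝓝 (B + (∑' j, b j) - (∑' j, b j) - 0)) :=
        ((tendsto_const_nhds.add (hWt.comp hxstop)).sub tendsto_const_nhds).sub
          (hH0.comp hxstop)
      have h5 : (fun k => B + Wsum (xs k) - (∑' j, b j) - H (xs k))
          = fun k => u' (xs k) := funext fun k => (hW _ (hxs0 k) (hxsn k)).symm
      rw [h5] at h4
      simpa using h4
    have hLB : L = B := tendsto_nhds_unique h1 h2
    exact hLB ▸ hL
  · -- jump of u
    intro k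
    obtain ⟨ε, hε, hloc⟩ := loc_right tseq htm htt k
    have hk0 : k ∉ (hKfin (tseq k)).toFinset := fun h =>
      lt_irrefl (tseq k) ((hKfin (tseq k)).mem_toFinset.1 h)
    set s1 : Finset ℕ := insert k (hKfin (tseq k)).toFinset with hs1
    set q : ℝ → ℝ := fun y => A + B * y
      + ((∑ j ∈ s1, (a j + b j * (y - tseq j))) - y * ∑' j, b j) + Φ y with hqdef
    have hueq : ∀ y ∈ Ioo (tseq k) (tseq k + ε), u y = q y := by
      intro y hy
      have hy0 : y ∈ Ici (0:ℝ) := le_of_lt (lt_trans (htp k) hy.1)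
      have hiffy : ∀ j, tseq j < y ↔ j ∈ s1 := by
        intro j
        rw [(hloc y hy.1 hy.2).1 j, hs1, Finset.mem_insert, (hKfin (tseq k)).mem_toFinset]
        exact or_comm
      rw [hrepΦ y hy0, tsum_ite_eq_sum tseq _ y s1 hiffy]
    have hqc : ContinuousAt q (tseq k) := by
      have h1 : Continuous (fun y : ℝ => A + B * y
          + ((∑ j ∈ s1, (a j + b j * (y - tseq j))) - y * ∑' j, b j)) :=
        (continuous_const.add (continuous_const.mul continuous_id)).add
          ((continuous_finset_sum s1 fun j _ => continuous_const.add
            (continuous_const.mul (continuous_id.sub continuous_const))).sub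
            (continuous_id.mul continuous_const))
      exact (h1.continuousAt).add (hΦd (tseq k) (htp k).le).continuousAt
    have hqtk : q (tseq k) = u (tseq k) + a k := by
      have hiff0 : ∀ j, tseq j < tseq k ↔ j ∈ (hKfin (tseq k)).toFinset := fun j =>
        ((hKfin (tseq k)).mem_toFinset).symm
      have hra := hrepΦ (tseq k) (le_of_lt (htp k))
      rw [tsum_ite_eq_sum tseq _ (tseq k) _ hiff0] at hra
      show A + B * (tseq k)
        + ((∑ j ∈ s1, (a j + b j * (tseq k - tseq j))) - (tseq k) * ∑' j, b j)
        + Φ (tseq k) = u (tseq k) + a k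
      rw [hra, hs1, Finset.sum_insert hk0]
      ring
    have hqt : Tendsto q (𝓝[>] (tseq k)) (𝓝 (u (tseq k) + a k)) := by
      rw [← hqtk]
      exact hqc.tendsto.mono_left nhdsWithin_le_nhds
    refine Tendsto.congr' ?_ hqt
    filter_upwards [Ioo_mem_nhdsGT_of_mem
      (⟨le_refl (tseq k), by linarith⟩ : tseq k ∈ Ico (tseq k) (tseq k + ε))] with y hy
    exact (hueq y hy).symm
  · -- jump of u'
    intro k
    have htk0 : 0 < tseq k := htp k
    obtain ⟨ε₁, hε₁, hε₁0, hlocL⟩ := loc_left tseq htm htt htp k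
    have hu'tk : u' (tseq k) = B + Wsum (tseq k) - (∑' j, b j) - H (tseq k) := by
      have hl1 : Tendsto u' (𝓝[<] (tseq k)) (𝓝 (u' (tseq k))) := hu.2.2.1.2.1 k
      have hg : Tendsto (fun y => B + Wsum (tseq k) - (∑' j, b j) - H y) (𝓝[<] (tseq k))
          (𝓝 (B + Wsum (tseq k) - (∑' j, b j) - H (tseq k))) :=
        (continuous_const.sub hHcont).continuousAt.tendsto.mono_left nhdsWithin_le_nhds
      have heq : (fun y => B + Wsum (tseq k) - (∑' j, b j) - H y)
          =ᶠ[𝓝[<] (tseq k)] u' := by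
        filter_upwards [Ioo_mem_nhdsLT_of_mem
          (⟨by linarith, le_refl (tseq k)⟩ : tseq k ∈ Ioc (tseq k - ε₁) (tseq k))] with y hy
        have h := hlocL y hy.1 hy.2
        have hy0 : y ∈ Ici (0:ℝ) := le_trans hε₁0 hy.1.le
        rw [hW y hy0 h.2]
        have hww : Wsum y = Wsum (tseq k) := tsum_congr fun j => by
          rw [if_congr (h.1 j) rfl rfl]
        rw [hww]
      exact tendsto_nhds_unique hl1 (Tendsto.congr' heq hg)
    obtain ⟨ε, hε, hlocR⟩ := loc_right tseq htm htt k
    have hk0 : k ∉ (hKfin (tseq k)).toFinset := fun h =>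
      lt_irrefl (tseq k) ((hKfin (tseq k)).mem_toFinset.1 h)
    have hg : Tendsto (fun y => B + Wsum (tseq k) + b k - (∑' j, b j) - H y)
        (𝓝[>] (tseq k)) (𝓝 (B + Wsum (tseq k) + b k - (∑' j, b j) - H (tseq k))) :=
      (continuous_const.sub hHcont).continuousAt.tendsto.mono_left nhdsWithin_le_nhds
    have heq : (fun y => B + Wsum (tseq k) + b k - (∑' j, b j) - H y)
        =ᶠ[𝓝[>] (tseq k)] u' := by
      filter_upwards [Ioo_mem_nhdsGT_of_mem
        (⟨le_refl (tseq k), by linarith⟩ : tseq k ∈ Ico (tseq k) (tseq k + ε))] with y hy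
      have h := hlocR y hy.1 hy.2
      have hy0 : y ∈ Ici (0:ℝ) := (lt_trans htk0 hy.1).le
      rw [hW y hy0 h.2]
      have hiffy : ∀ j, tseq j < y ↔ j ∈ insert k (hKfin (tseq k)).toFinset := by
        intro j
        rw [h.1 j, Finset.mem_insert, (hKfin (tseq k)).mem_toFinset]
        exact or_comm
      have hww : Wsum y = b k + Wsum (tseq k) := by
        rw [show Wsum y = ∑ j ∈ insert k (hKfin (tseq k)).toFinset, b j from
          tsum_ite_eq_sum tseq b y _ hiffy, Finset.sum_insert hk0, hWsum (tseq k)]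
      rw [hww]
      ring
    have hfin : u' (tseq k) + b k
        = B + Wsum (tseq k) + b k - (∑' j, b j) - H (tseq k) := by
      rw [hu'tk]; ring
    rw [hfin]
    exact Tendsto.congr' heq hg

lemma pc_aemeasurable (tseq : ℕ → ℝ) (u : ℝ → ℝ)
    (hc : ∀ t ∈ Ici (0:ℝ), t ∉ range tseq → ContinuousWithinAt u (Ici 0) t) :
    AEMeasurable u (volume.restrict (Ioi (0:ℝ))) := by
  set s : Set ℝ := Ioi 0 \ range tseq with hs
  have hsm : MeasurableSet s :=
    measurableSet_Ioi.diff (Set.Countable.measurableSet (countable_range tseq))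
  have hcont : ContinuousOn u s := fun t ht =>
    (hc t (mem_Ici.2 (le_of_lt (show (0:ℝ) < t from ht.1))) ht.2).mono (hs ▸ (diff_subset.trans Ioi_subset_Ici_self))
  have h1 : AEMeasurable u (volume.restrict s) := hcont.aemeasurable hsm
  have hae : s =ᵐ[volume] Ioi (0:ℝ) := by
    rw [ae_eq_set]
    constructor
    · rw [show s \ Ioi 0 = ∅ from by simp [hs, diff_subset_iff]]
      · exact measure_empty
    · refine measure_mono_null ?_ ((countable_range tseq).measure_zero volume)
      intro t ht
      simp only [hs, mem_diff, not_and, not_not] at ht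
      exact ht.2 ht.1
  rwa [Measure.restrict_congr_set hae] at h1

lemma carath_aesm (f : ℝ → ℝ → ℝ → ℝ → ℝ → ℝ)
    (hmeas : ∀ x y z w : ℝ, Measurable fun t => f t x y z w)
    (hcont : ∀ᵐ t ∂(volume.restrict (Ici (0:ℝ))),
      Continuous fun p : ℝ × ℝ × ℝ × ℝ => f t p.1 p.2.1 p.2.2.1 p.2.2.2)
    (u1 u2 u3 u4 : ℝ → ℝ)
    (h1 : AEMeasurable u1 (volume.restrict (Ioi (0:ℝ))))
    (h2 : AEMeasurable u2 (volume.restrict (Ioi (0:ℝ))))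
    (h3 : AEMeasurable u3 (volume.restrict (Ioi (0:ℝ))))
    (h4 : AEMeasurable u4 (volume.restrict (Ioi (0:ℝ)))) :
    AEStronglyMeasurable (fun t => f t (u1 t) (u2 t) (u3 t) (u4 t))
      (volume.restrict (Ioi (0:ℝ))) := by
  classical
  have hBad0 : (volume.restrict (Ici (0:ℝ)))
      {t | ¬ Continuous fun p : ℝ × ℝ × ℝ × ℝ => f t p.1 p.2.1 p.2.2.1 p.2.2.2} = 0 :=
    ae_iff.1 hcont
  set N : Set ℝ := toMeasurable (volume.restrict (Ici (0:ℝ)))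
    {t | ¬ Continuous fun p : ℝ × ℝ × ℝ × ℝ => f t p.1 p.2.1 p.2.2.1 p.2.2.2} with hN
  have hNmeas : MeasurableSet N := measurableSet_toMeasurable _ _
  have hN0 : (volume.restrict (Ici (0:ℝ))) N = 0 := by
    rw [hN, measure_toMeasurable]
    exact hBad0
  set f' : ℝ → (ℝ × ℝ × ℝ × ℝ) → ℝ :=
    fun t p => if t ∈ N then 0 else f t p.1 p.2.1 p.2.2.1 p.2.2.2 with hf'
  have hcont' : ∀ t, Continuous fun p : ℝ × ℝ × ℝ × ℝ => f' t p := by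
    intro t
    by_cases h : t ∈ N
    · simp only [hf', h, if_true]
      exact continuous_const
    · simp only [hf', h, if_false]
      have : t ∉ {t | ¬ Continuous fun p : ℝ × ℝ × ℝ × ℝ => f t p.1 p.2.1 p.2.2.1 p.2.2.2} :=
        fun hc' => h (subset_toMeasurable _ _ hc')
      simpa using this
  have hmeas' : ∀ p : ℝ × ℝ × ℝ × ℝ, StronglyMeasurable fun t => f' t p := by
    intro p
    exact (Measurable.ite hNmeas measurable_const
      (hmeas p.1 p.2.1 p.2.2.1 p.2.2.2)).stronglyMeasurable
  have hSM : StronglyMeasurable (Function.uncurry fun (p : ℝ × ℝ × ℝ × ℝ) (t : ℝ) => f' t p) :=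
    stronglyMeasurable_uncurry_of_continuous_of_stronglyMeasurable hcont' hmeas'
  have hP : AEMeasurable (fun t => ((u1 t, u2 t, u3 t, u4 t), t))
      (volume.restrict (Ioi (0:ℝ))) :=
    ((h1.prodMk (h2.prodMk (h3.prodMk h4))).prodMk aemeasurable_id)
  have hcomp : AEStronglyMeasurable (fun t => f' t (u1 t, u2 t, u3 t, u4 t))
      (volume.restrict (Ioi (0:ℝ))) := by
    have := (hSM.aestronglyMeasurable (μ := (volume.restrict (Ioi (0:ℝ))).map
      (fun t => ((u1 t, u2 t, u3 t, u4 t), t)))).comp_aemeasurable hP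
    exact this.congr (Eventually.of_forall fun t => rfl)
  refine hcomp.congr ?_
  have hN0' : (volume.restrict (Ioi (0:ℝ))) N = 0 :=
    le_antisymm (le_trans (Measure.restrict_mono Ioi_subset_Ici_self le_rfl N) hN0.le)
      zero_le
  have hae : ∀ᵐ t ∂(volume.restrict (Ioi (0:ℝ))), t ∉ N := by
    rw [ae_iff]
    simpa using hN0'
  filter_upwards [hae] with t ht
  simp only [hf', ht, if_false]

lemma comp_integrable (f : ℝ → ℝ → ℝ → ℝ → ℝ → ℝ) (hf : L1Caratheodory f)
    (tseq τseq : ℕ → ℝ) (u u' v v' : ℝ → ℝ)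
    (hu : MemX tseq u u') (hv : MemX τseq v v')
    (ρ : ℝ) (hρ : 0 < ρ)
    (hub : ∀ t ∈ Ici (0:ℝ), |u t| < ρ * (1 + t) ∧ |u' t| < ρ)
    (hvb : ∀ t ∈ Ici (0:ℝ), |v t| < ρ * (1 + t) ∧ |v' t| < ρ) :
    IntegrableOn (fun s => f s (u s) (v s) (u' s) (v' s)) (Ioi 0) := by
  have hm1 := pc_aemeasurable tseq u hu.1.1
  have hm2 := pc_aemeasurable τseq v hv.1.1
  have hm3 := pc_aemeasurable tseq u' hu.2.2.1.1
  have hm4 := pc_aemeasurable τseq v' hv.2.2.1.1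
  have hFm := carath_aesm f hf.1 hf.2.1 u v u' v' hm1 hm2 hm3 hm4
  obtain ⟨φ, hφnn, hφint, hφbd⟩ := hf.2.2 ρ hρ
  refine Integrable.mono (hφint.mono_set Ioi_subset_Ici_self) hFm ?_
  have hbd' := ae_mono (Measure.restrict_mono Ioi_subset_Ici_self le_rfl) hφbd
  filter_upwards [hbd', ae_restrict_mem measurableSet_Ioi] with t hbd ht
  have h1 := hub t (mem_Ici.2 (le_of_lt (mem_Ioi.1 ht)))
  have h2 := hvb t (mem_Ici.2 (le_of_lt (mem_Ioi.1 ht)))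
  rw [Real.norm_eq_abs, Real.norm_eq_abs, abs_of_nonneg (hφnn t)]
  exact hbd _ _ _ _ h1.1.le h2.1.le h1.2.le h2.2.le

/-- If `(u,v)` (with bounds `ρ`) satisfies the integral representation
with Green's function `G(t,s) = -min t s`, impulse functions `I_{0k}, I_{1k}, J_{0j}, J_{1j}`
and nonlinearities `f, h`, then `(u,v)` solves the impulsive boundary value problem:
`u'' = f(t,u,v,u',v')` a.e. off `{t_k}`, `v'' = h(t,u,v,u',v')` a.e. off `{τ_j}`,
`u(0) = A₁`, `v(0) = A₂`, `u'(+∞) = B₁`, `v'(+∞) = B₂`, together with the jump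
conditions at the impulse points. -/
theorem representation_implies_solution
    (f h : ℝ → ℝ → ℝ → ℝ → ℝ → ℝ)
    (hf : L1Caratheodory f) (hh : L1Caratheodory h)
    (I0 I1 J0 J1 : ℕ → ℝ → ℝ → ℝ → ℝ)
    (hI0 : CaratheodorySeq I0) (hI1 : CaratheodorySeq I1)
    (hJ0 : CaratheodorySeq J0) (hJ1 : CaratheodorySeq J1)
    (tseq τseq : ℕ → ℝ)
    (htm : StrictMono tseq) (htp : ∀ k, 0 < tseq k) (htt : Tendsto tseq atTop atTop)
    (hτm : StrictMono τseq) (hτp : ∀ j, 0 < τseq j) (hτt : Tendsto τseq atTop atTop)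
    (A₁ A₂ B₁ B₂ : ℝ) (u u' v v' : ℝ → ℝ)
    (hu : MemX tseq u u') (hv : MemX τseq v v')
    (ρ : ℝ) (hρ : 0 < ρ)
    (hub : ∀ t ∈ Ici (0:ℝ), |u t| < ρ * (1 + t) ∧ |u' t| < ρ)
    (hvb : ∀ t ∈ Ici (0:ℝ), |v t| < ρ * (1 + t) ∧ |v' t| < ρ)
    (hrepu : ∀ t ∈ Ici (0:ℝ), u t = A₁ + B₁ * t
      + ((∑' k, if tseq k < t then
            I0 k (tseq k) (u (tseq k)) (u' (tseq k))
              + I1 k (tseq k) (u (tseq k)) (u' (tseq k)) * (t - tseq k) else 0)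
          - t * ∑' k, I1 k (tseq k) (u (tseq k)) (u' (tseq k)))
      + ∫ s in Ioi (0:ℝ), (-(min t s)) * f s (u s) (v s) (u' s) (v' s))
    (hrepv : ∀ t ∈ Ici (0:ℝ), v t = A₂ + B₂ * t
      + ((∑' j, if τseq j < t then
            J0 j (τseq j) (v (τseq j)) (v' (τseq j))
              + J1 j (τseq j) (v (τseq j)) (v' (τseq j)) * (t - τseq j) else 0)
          - t * ∑' j, J1 j (τseq j) (v (τseq j)) (v' (τseq j)))
      + ∫ s in Ioi (0:ℝ), (-(min t s)) * h s (u s) (v s) (u' s) (v' s)) :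
    (∀ᵐ t ∂(volume.restrict (Ici (0:ℝ))), t ∉ range tseq →
      HasDerivAt u' (f t (u t) (v t) (u' t) (v' t)) t) ∧
    (∀ᵐ t ∂(volume.restrict (Ici (0:ℝ))), t ∉ range τseq →
      HasDerivAt v' (h t (u t) (v t) (u' t) (v' t)) t) ∧
    u 0 = A₁ ∧ v 0 = A₂ ∧
    Tendsto u' atTop (𝓝 B₁) ∧ Tendsto v' atTop (𝓝 B₂) ∧
    (∀ k, Tendsto u (𝓝[>] (tseq k))
      (𝓝 (u (tseq k) + I0 k (tseq k) (u (tseq k)) (u' (tseq k))))) ∧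
    (∀ k, Tendsto u' (𝓝[>] (tseq k))
      (𝓝 (u' (tseq k) + I1 k (tseq k) (u (tseq k)) (u' (tseq k))))) ∧
    (∀ j, Tendsto v (𝓝[>] (τseq j))
      (𝓝 (v (τseq j) + J0 j (τseq j) (v (τseq j)) (v' (τseq j))))) ∧
    (∀ j, Tendsto v' (𝓝[>] (τseq j))
      (𝓝 (v' (τseq j) + J1 j (τseq j) (v (τseq j)) (v' (τseq j))))) := by

  obtain ⟨χI, hχInn, hχIsum, hχIb⟩ := hI1.2 ρ hρ
  have hbu : Summable (fun k => I1 k (tseq k) (u (tseq k)) (u' (tseq k))) := by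
    refine Summable.of_norm_bounded hχIsum fun k => ?_
    have h1 := hub (tseq k) (htp k).le
    exact hχIb k (tseq k) _ _ h1.1 h1.2
  obtain ⟨χJ, hχJnn, hχJsum, hχJb⟩ := hJ1.2 ρ hρ
  have hbv : Summable (fun j => J1 j (τseq j) (v (τseq j)) (v' (τseq j))) := by
    refine Summable.of_norm_bounded hχJsum fun j => ?_
    have h1 := hvb (τseq j) (hτp j).le
    exact hχJb j (τseq j) _ _ h1.1 h1.2
  have hFint : IntegrableOn (fun s => f s (u s) (v s) (u' s) (v' s)) (Ioi 0) :=
    comp_integrable f hf tseq τseq u u' v v' hu hv ρ hρ hub hvb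
  have hGint : IntegrableOn (fun s => h s (u s) (v s) (u' s) (v' s)) (Ioi 0) :=
    comp_integrable h hh tseq τseq u u' v v' hu hv ρ hρ hub hvb
  have hmu := master tseq htm htp htt A₁ B₁ u u' hu _ hFint
    (fun k => I0 k (tseq k) (u (tseq k)) (u' (tseq k)))
    (fun k => I1 k (tseq k) (u (tseq k)) (u' (tseq k))) hbu hrepu
  have hmv := master τseq hτm hτp hτt A₂ B₂ v v' hv _ hGint
    (fun j => J0 j (τseq j) (v (τseq j)) (v' (τseq j)))
    (fun j => J1 j (τseq j) (v (τseq j)) (v' (τseq j))) hbv hrepv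
  exact ⟨hmu.1, hmv.1, hmu.2.1, hmv.2.1, hmu.2.2.1, hmv.2.2.1,
    hmu.2.2.2.1, hmu.2.2.2.2, hmv.2.2.2.1, hmv.2.2.2.2⟩
end
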